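/- arXiv:1311.5301 — 13 statements merged into one kernel-verified Lean document; each statement's English description precedes it below -/
import Mathlib

section
/- Let γ > 0 and let φ : [0,∞) → ℝ satisfy φ(1) = −1 and φ(z) ≥ −z^{1+γ} for all z ≥ 0. Let f and g be nonnegative measurable functions on ℝ^k such that ∫f^{1+γ}, ∫g^{1+γ}, and ∫f g^γ are finite and ∫g^{1+γ} > 0 and ∫f^{1+γ} > 0. Then the Hölder score satisfies S_φ(f,g) ≥ S_φ(f,f), i.e., φ(⟨f g^γ⟩/⟨g^{1+γ}⟩)·⟨g^{1+γ}⟩ ≥ −⟨f^{1+γ}⟩. -/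
open MeasureTheory

/-! Hölder's inequality with exponents `1 + γ` and `(1 + γ) / γ` gives
`⟨f g^γ⟩^{1+γ} ≤ ⟨f^{1+γ}⟩ ⟨g^{1+γ}⟩^γ`, i.e. `z^{1+γ} ⟨g^{1+γ}⟩ ≤ ⟨f^{1+γ}⟩` for
`z = ⟨f g^γ⟩ / ⟨g^{1+γ}⟩`; the lower bound `φ z ≥ -z^{1+γ}` then finishes. -/

section Holder

variable {α : Type*} [MeasurableSpace α] {μ : Measure α}

theorem memLp_ofReal_of_integrable_rpow {p : ℝ} (hp : 0 < p) {f : α → ℝ}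
    (hfm : AEStronglyMeasurable f μ) (hf0 : ∀ x, 0 ≤ f x)
    (hint : Integrable (fun x => f x ^ p) μ) : MemLp f (ENNReal.ofReal p) μ := by
  rw [← integrable_norm_rpow_iff hfm (by simpa using hp) ENNReal.ofReal_ne_top,
    ENNReal.toReal_ofReal hp.le]
  simpa only [Real.norm_of_nonneg (hf0 _)] using hint

theorem integral_mul_rpow_rpow_le {γ : ℝ} (hγ : 0 < γ) {f g : α → ℝ}
    (hfm : Measurable f) (hgm : Measurable g) (hf0 : ∀ x, 0 ≤ f x) (hg0 : ∀ x, 0 ≤ g x)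
    (hfint : Integrable (fun x => f x ^ (1 + γ)) μ)
    (hgint : Integrable (fun x => g x ^ (1 + γ)) μ) :
    (∫ x, f x * g x ^ γ ∂μ) ^ (1 + γ) ≤
      (∫ x, f x ^ (1 + γ) ∂μ) * (∫ x, g x ^ (1 + γ) ∂μ) ^ γ := by
  have hp : 0 < 1 + γ := by linarith
  have hpq : (1 + γ).HolderConjugate ((1 + γ) / γ) := by
    rw [Real.holderConjugate_iff]
    exact ⟨by linarith, by field_simp⟩
  have hgγ0 : ∀ x, 0 ≤ g x ^ γ := fun x => Real.rpow_nonneg (hg0 x) γ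
  have hgγq : ∀ x, (g x ^ γ) ^ ((1 + γ) / γ) = g x ^ (1 + γ) := fun x => by
    rw [← Real.rpow_mul (hg0 x), mul_div_cancel₀ _ hγ.ne']
  have hf : MemLp f (ENNReal.ofReal (1 + γ)) μ :=
    memLp_ofReal_of_integrable_rpow hp hfm.aestronglyMeasurable hf0 hfint
  have hg : MemLp (fun x => g x ^ γ) (ENNReal.ofReal ((1 + γ) / γ)) μ :=
    memLp_ofReal_of_integrable_rpow (by positivity)
      (hgm.pow_const γ).aestronglyMeasurable hgγ0 (by simpa only [hgγq] using hgint)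
  have holder := integral_mul_le_Lp_mul_Lq_of_nonneg hpq (.of_forall hf0) (.of_forall hgγ0) hf hg
  simp only [hgγq] at holder
  have hF : 0 ≤ ∫ x, f x ^ (1 + γ) ∂μ :=
    integral_nonneg fun x => Real.rpow_nonneg (hf0 x) _
  have hG : 0 ≤ ∫ x, g x ^ (1 + γ) ∂μ :=
    integral_nonneg fun x => Real.rpow_nonneg (hg0 x) _
  calc (∫ x, f x * g x ^ γ ∂μ) ^ (1 + γ)
      ≤ ((∫ x, f x ^ (1 + γ) ∂μ) ^ (1 / (1 + γ)) *
          (∫ x, g x ^ (1 + γ) ∂μ) ^ (1 / ((1 + γ) / γ))) ^ (1 + γ) :=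
        Real.rpow_le_rpow (integral_nonneg fun x => mul_nonneg (hf0 x) (hgγ0 x)) holder hp.le
    _ = (∫ x, f x ^ (1 + γ) ∂μ) * (∫ x, g x ^ (1 + γ) ∂μ) ^ γ := by
        rw [Real.mul_rpow (by positivity) (by positivity), ← Real.rpow_mul hF,
          ← Real.rpow_mul hG, one_div_mul_cancel hp.ne', Real.rpow_one, one_div_div,
          div_mul_cancel₀ _ hp.ne']

end Holder

theorem rpow_div_mul_le_of_rpow_le {γ I F G : ℝ} (hG : 0 < G) (hI : 0 ≤ I)
    (h : I ^ (1 + γ) ≤ F * G ^ γ) : (I / G) ^ (1 + γ) * G ≤ F := by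
  have hGp : G ^ (1 + γ) = G ^ γ * G := by
    rw [Real.rpow_add hG, Real.rpow_one, mul_comm]
  rw [Real.div_rpow hI hG.le, div_mul_eq_mul_div, div_le_iff₀ (Real.rpow_pos_of_pos hG _), hGp,
    ← mul_assoc]
  exact mul_le_mul_of_nonneg_right h hG.le

theorem holder_score_proper_general {k : ℕ} (γ : ℝ) (hγ : 0 < γ)
    (φ : ℝ → ℝ)
    (hφ : ∀ z : ℝ, 0 ≤ z → -(z ^ (1 + γ)) ≤ φ z)
    (f g : (Fin k → ℝ) → ℝ)
    (hfm : Measurable f) (hgm : Measurable g)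
    (hf0 : ∀ x, 0 ≤ f x) (hg0 : ∀ x, 0 ≤ g x)
    (hfint : Integrable (fun x => f x ^ (1 + γ)))
    (hgint : Integrable (fun x => g x ^ (1 + γ)))
    (hgpos : 0 < ∫ x, g x ^ (1 + γ)) :
    -(∫ x, f x ^ (1 + γ)) ≤
      φ ((∫ x, f x * g x ^ γ) / (∫ x, g x ^ (1 + γ))) * (∫ x, g x ^ (1 + γ)) := by
  set z := (∫ x, f x * g x ^ γ) / ∫ x, g x ^ (1 + γ)
  have hI : 0 ≤ ∫ x, f x * g x ^ γ :=
    integral_nonneg fun x => mul_nonneg (hf0 x) (Real.rpow_nonneg (hg0 x) γ)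
  have hz : z ^ (1 + γ) * (∫ x, g x ^ (1 + γ)) ≤ ∫ x, f x ^ (1 + γ) :=
    rpow_div_mul_le_of_rpow_le hgpos hI
      (integral_mul_rpow_rpow_le hγ hfm hgm hf0 hg0 hfint hgint)
  calc -(∫ x, f x ^ (1 + γ)) ≤ -(z ^ (1 + γ)) * ∫ x, g x ^ (1 + γ) := by linarith
    _ ≤ φ z * ∫ x, g x ^ (1 + γ) :=
        mul_le_mul_of_nonneg_right (hφ z (div_nonneg hI hgpos.le)) hgpos.le

/-- The Hölder score satisfies `S_φ(f,g) ≥ S_φ(f,f)` for nonnegative measurable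
functions `f, g` on `ℝ^k`, where `S_φ(f,g) = φ(⟨f g^γ⟩/⟨g^{1+γ}⟩)·⟨g^{1+γ}⟩` and
`S_φ(f,f) = −⟨f^{1+γ}⟩`. -/
theorem holder_score_proper {k : ℕ} (γ : ℝ) (hγ : 0 < γ)
    (φ : ℝ → ℝ) (hφ1 : φ 1 = -1)
    (hφ : ∀ z : ℝ, 0 ≤ z → -(z ^ (1 + γ)) ≤ φ z)
    (f g : (Fin k → ℝ) → ℝ)
    (hfm : Measurable f) (hgm : Measurable g)
    (hf0 : ∀ x, 0 ≤ f x) (hg0 : ∀ x, 0 ≤ g x)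
    (hfint : Integrable (fun x => f x ^ (1 + γ)))
    (hgint : Integrable (fun x => g x ^ (1 + γ)))
    (hfgint : Integrable (fun x => f x * g x ^ γ))
    (hgpos : 0 < ∫ x, g x ^ (1 + γ))
    (hfpos : 0 < ∫ x, f x ^ (1 + γ)) :
    -(∫ x, f x ^ (1 + γ)) ≤
      φ ((∫ x, f x * g x ^ γ) / (∫ x, g x ^ (1 + γ))) * (∫ x, g x ^ (1 + γ)) :=
  holder_score_proper_general γ hγ φ hφ f g hfm hgm hf0 hg0 hfint hgint hgpos
end

section
/- Let γ > 0 and let f and g be nonnegative measurable functions on ℝ^k, not almost everywhere zero, with ∫f^{1+γ}, ∫g^{1+γ}, ∫f g^γ finite and ∫f^{1+γ} > 0, ∫g^{1+γ} > 0. Then the density-power score satisfies S_power(f,g) ≥ S_power(f,f), and S_power(f,g) = S_power(f,f) holds if and only if f = g almost everywhere. -/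
open MeasureTheory

/-- Pointwise strict inequality: for `a ≠ b` nonnegative,
`(1+γ) a b^γ < a^(1+γ) + γ b^(1+γ)`. -/
lemma density_power_pointwise_lt (γ a b : ℝ) (hγ : 0 < γ) (ha : 0 ≤ a) (hb : 0 ≤ b)
    (hne : a ≠ b) :
    (1 + γ) * (a * b ^ γ) < a ^ (1 + γ) + γ * b ^ (1 + γ) := by
  rcases eq_or_lt_of_le hb with hb0 | hb
  · have hb0' : b = 0 := hb0.symm
    subst hb0'
    have hane : a ≠ 0 := hne
    have hap : 0 < a := ha.lt_of_ne (Ne.symm hane)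
    rw [Real.zero_rpow hγ.ne', Real.zero_rpow (by positivity : (1 : ℝ) + γ ≠ 0)]
    have : 0 < a ^ (1 + γ) := Real.rpow_pos_of_pos hap _
    nlinarith
  · have hs : -1 ≤ a / b - 1 := by
      have : 0 ≤ a / b := div_nonneg ha hb.le
      linarith
    have hs' : a / b - 1 ≠ 0 := by
      intro h
      apply hne
      have : a / b = 1 := by linarith
      field_simp at this
      linarith
    have hB := one_add_mul_self_lt_rpow_one_add hs hs' (by linarith : (1 : ℝ) < 1 + γ)
    have h2 : (1 + (a / b - 1)) = a / b := by ring
    rw [h2] at hB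
    have h3 : (a / b) ^ (1 + γ) = a ^ (1 + γ) / b ^ (1 + γ) := Real.div_rpow ha hb.le (1 + γ)
    have h4 : b ^ (1 + γ) = b * b ^ γ := by rw [Real.rpow_add hb, Real.rpow_one]
    have hbp' : 0 < b ^ (1 + γ) := Real.rpow_pos_of_pos hb _
    have hB' := mul_lt_mul_of_pos_right hB hbp'
    rw [h3, div_mul_cancel₀ _ hbp'.ne'] at hB'
    have h5 : (1 + (1 + γ) * (a / b - 1)) * b ^ (1 + γ)
        = (1 + γ) * (a * b ^ γ) - γ * b ^ (1 + γ) := by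
      rw [h4]
      field_simp
      ring
    rw [h5] at hB'
    linarith

lemma density_power_pointwise_le (γ a b : ℝ) (hγ : 0 < γ) (ha : 0 ≤ a) (hb : 0 ≤ b) :
    (1 + γ) * (a * b ^ γ) ≤ a ^ (1 + γ) + γ * b ^ (1 + γ) := by
  rcases eq_or_ne a b with rfl | hne
  · have h4 : a ^ (1 + γ) = a * a ^ γ := by
      rw [Real.rpow_add' ha (by positivity), Real.rpow_one]
    rw [h4]; ring_nf; exact le_refl _
  · exact (density_power_pointwise_lt γ a b hγ ha hb hne).le

/-- The density-power score `S_power(f,g) = γ∫g^{1+γ} − (1+γ)∫f g^γ` satisfies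
`S_power(f,g) ≥ S_power(f,f) = −∫f^{1+γ}`, with equality iff `f = g` almost everywhere. -/
theorem density_power_score_strictly_proper {k : ℕ} (γ : ℝ) (hγ : 0 < γ)
    (f g : (Fin k → ℝ) → ℝ)
    (hfm : Measurable f) (hgm : Measurable g)
    (hf0 : ∀ x, 0 ≤ f x) (hg0 : ∀ x, 0 ≤ g x)
    (hfne : ¬ (f =ᵐ[volume] (fun _ => 0)))
    (hgne : ¬ (g =ᵐ[volume] (fun _ => 0)))
    (hfint : Integrable (fun x => f x ^ (1 + γ)))
    (hgint : Integrable (fun x => g x ^ (1 + γ)))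
    (hfgint : Integrable (fun x => f x * g x ^ γ))
    (hfpos : 0 < ∫ x, f x ^ (1 + γ))
    (hgpos : 0 < ∫ x, g x ^ (1 + γ)) :
    (-(∫ x, f x ^ (1 + γ)) ≤
        γ * (∫ x, g x ^ (1 + γ)) - (1 + γ) * (∫ x, f x * g x ^ γ)) ∧
    (γ * (∫ x, g x ^ (1 + γ)) - (1 + γ) * (∫ x, f x * g x ^ γ) =
        -(∫ x, f x ^ (1 + γ)) ↔ f =ᵐ[volume] g) := by
  set h : (Fin k → ℝ) → ℝ :=
    fun x => f x ^ (1 + γ) + γ * g x ^ (1 + γ) - (1 + γ) * (f x * g x ^ γ) with hdef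
  have hh0 : ∀ x, 0 ≤ h x := fun x => by
    have := density_power_pointwise_le γ (f x) (g x) hγ (hf0 x) (hg0 x)
    simp only [hdef]; linarith
  have hhint : Integrable h :=
    (hfint.add (hgint.const_mul γ)).sub (hfgint.const_mul (1 + γ))
  have hint_eq : ∫ x, h x = (∫ x, f x ^ (1 + γ)) + γ * (∫ x, g x ^ (1 + γ))
      - (1 + γ) * (∫ x, f x * g x ^ γ) := by
    simp only [hdef]
    rw [integral_sub (μ := volume) ((hfint.add (hgint.const_mul γ)) :
        Integrable (fun x => f x ^ (1 + γ) + γ * g x ^ (1 + γ)))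
        (hfgint.const_mul (1 + γ)),
      integral_add hfint (hgint.const_mul γ), integral_const_mul, integral_const_mul]
  have hnonneg : 0 ≤ ∫ x, h x := integral_nonneg hh0
  constructor
  · linarith [hnonneg, hint_eq]
  · constructor
    · intro heq
      have hzero : ∫ x, h x = 0 := by linarith [hint_eq]
      have hae : h =ᵐ[volume] 0 := by
        rw [← hzero] at hnonneg
        exact (integral_eq_zero_iff_of_nonneg hh0 hhint).mp hzero
      filter_upwards [hae] with x hx
      by_contra hne
      have := density_power_pointwise_lt γ (f x) (g x) hγ (hf0 x) (hg0 x) hne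
      simp only [hdef, Pi.zero_apply] at hx
      linarith
    · intro hae
      have e1 : (∫ x, f x ^ (1 + γ)) = ∫ x, g x ^ (1 + γ) :=
        integral_congr_ae (by filter_upwards [hae] with x hx; rw [hx])
      have e2 : (∫ x, f x * g x ^ γ) = ∫ x, g x ^ (1 + γ) :=
        integral_congr_ae (by
          filter_upwards [hae] with x hx
          rw [hx, Real.rpow_add' (hg0 x) (by positivity), Real.rpow_one])
      rw [e1, e2]; ring
end

section
/- Let γ > 0 and let f and g be nonnegative measurable functions on ℝ^k with ∫f^{1+γ}, ∫g^{1+γ}, ∫f g^γ finite and ∫f^{1+γ} > 0, ∫g^{1+γ} > 0. Then the pseudo-spherical score satisfies S_sphere(f,g) ≥ S_sphere(f,f), and equality S_sphere(f,g) = S_sphere(f,f) holds if and only if f and g are linearly dependent, i.e., there exists a constant λ > 0 with f = λ·g almost everywhere. -/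
/-!
With `p = 1 + γ`, `A = (∫ f^p)^(1/p)` and `B = (∫ g^p)^(1/p)`, Young's inequality for the conjugate
exponents `p` and `p / γ`, applied pointwise to `f / A` and `(g / B)^γ`, leaves a nonnegative defect
whose integral is `1 - ∫ f g^γ / (A B^γ)`. This is Hölder's inequality `∫ f g^γ ≤ A B^γ`, i.e.
`S(f, f) = -A ≤ S(f, g)`. Equality makes the defect vanish a.e., and the equality case of Young's
inequality then gives `f / A = g / B` a.e. Conversely, `S(f, ·)` is invariant under positive
scaling, so `f = λ g` a.e. gives `S(f, g) = S(f, λ g) = S(f, f)`.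
-/

open MeasureTheory

noncomputable def youngDefect (γ a b : ℝ) : ℝ :=
  (a ^ (1 + γ) + γ * b ^ (1 + γ)) / (1 + γ) - a * b ^ γ

section YoungDefect

variable {γ a b A B : ℝ}

lemma holderConjugate_one_add (hγ : 0 < γ) : (1 + γ).HolderConjugate ((1 + γ) / γ) :=
  Real.holderConjugate_iff.mpr ⟨by linarith, by field_simp⟩

lemma youngDefect_eq_young (hγ : 0 < γ) (hb : 0 ≤ b) :
    youngDefect γ a b =
      a ^ (1 + γ) / (1 + γ) + (b ^ γ) ^ ((1 + γ) / γ) / ((1 + γ) / γ) - a * b ^ γ := by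
  rw [youngDefect, ← Real.rpow_mul hb, mul_div_cancel₀ _ hγ.ne']
  field_simp

lemma youngDefect_nonneg (hγ : 0 < γ) (ha : 0 ≤ a) (hb : 0 ≤ b) : 0 ≤ youngDefect γ a b := by
  rw [youngDefect_eq_young hγ hb, sub_nonneg]
  exact Real.young_inequality_of_nonneg ha (Real.rpow_nonneg hb γ) (holderConjugate_one_add hγ)

lemma youngDefect_eq_zero_iff (hγ : 0 < γ) (ha : 0 ≤ a) (hb : 0 ≤ b) :
    youngDefect γ a b = 0 ↔ a = b := by
  rw [youngDefect_eq_young hγ hb, sub_eq_zero, eq_comm,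
    Real.young_inequality_eq_iff_of_nonneg ha (Real.rpow_nonneg hb γ) (holderConjugate_one_add hγ),
    ← Real.rpow_mul hb, mul_div_cancel₀ _ hγ.ne', Real.rpow_left_inj ha hb (by positivity)]

lemma youngDefect_div_div (hA : 0 < A) (hB : 0 < B) (ha : 0 ≤ a) (hb : 0 ≤ b) :
    youngDefect γ (a / A) (b / B) =
      (a ^ (1 + γ) / A ^ (1 + γ) + γ * (b ^ (1 + γ) / B ^ (1 + γ))) / (1 + γ)
        - a * b ^ γ / (A * B ^ γ) := by
  rw [youngDefect, Real.div_rpow ha hA.le, Real.div_rpow hb hB.le, Real.div_rpow hb hB.le,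
    div_mul_div_comm]

end YoungDefect

section Holder

variable {α : Type*} [MeasurableSpace α] {μ : Measure α} {γ A B : ℝ} {f g : α → ℝ}

lemma integrable_youngDefect_div (hA : 0 < A) (hB : 0 < B)
    (hf0 : ∀ x, 0 ≤ f x) (hg0 : ∀ x, 0 ≤ g x)
    (hf : Integrable (fun x => f x ^ (1 + γ)) μ) (hg : Integrable (fun x => g x ^ (1 + γ)) μ)
    (hfg : Integrable (fun x => f x * g x ^ γ) μ) :
    Integrable (fun x => youngDefect γ (f x / A) (g x / B)) μ :=
  ((((hf.div_const _).add ((hg.div_const _).const_mul _)).div_const _).sub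
    (hfg.div_const _)).congr (ae_of_all _ fun x => (youngDefect_div_div hA hB (hf0 x) (hg0 x)).symm)

lemma integral_youngDefect_div (hγ : 1 + γ ≠ 0) (hA : 0 < A) (hB : 0 < B)
    (hf0 : ∀ x, 0 ≤ f x) (hg0 : ∀ x, 0 ≤ g x)
    (hf : Integrable (fun x => f x ^ (1 + γ)) μ) (hg : Integrable (fun x => g x ^ (1 + γ)) μ)
    (hfg : Integrable (fun x => f x * g x ^ γ) μ)
    (hfA : ∫ x, f x ^ (1 + γ) ∂μ = A ^ (1 + γ)) (hgB : ∫ x, g x ^ (1 + γ) ∂μ = B ^ (1 + γ)) :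
    ∫ x, youngDefect γ (f x / A) (g x / B) ∂μ = 1 - (∫ x, f x * g x ^ γ ∂μ) / (A * B ^ γ) := by
  have hfA' : Integrable (fun x => f x ^ (1 + γ) / A ^ (1 + γ)) μ := hf.div_const _
  have hgB' : Integrable (fun x => γ * (g x ^ (1 + γ) / B ^ (1 + γ))) μ :=
    (hg.div_const _).const_mul _
  have hsum : Integrable (fun x =>
      (f x ^ (1 + γ) / A ^ (1 + γ) + γ * (g x ^ (1 + γ) / B ^ (1 + γ))) / (1 + γ)) μ :=
    (hfA'.add hgB').div_const _
  rw [integral_congr_ae (ae_of_all _ fun x => youngDefect_div_div hA hB (hf0 x) (hg0 x)),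
    integral_sub hsum (hfg.div_const _), integral_div,
    integral_add hfA' hgB', integral_const_mul, integral_div, integral_div, integral_div, hfA, hgB,
    div_self (by positivity), div_self (by positivity), mul_one, div_self hγ]

theorem integral_mul_rpow_le (hγ : 0 < γ) (hA : 0 < A) (hB : 0 < B)
    (hf0 : ∀ x, 0 ≤ f x) (hg0 : ∀ x, 0 ≤ g x)
    (hf : Integrable (fun x => f x ^ (1 + γ)) μ) (hg : Integrable (fun x => g x ^ (1 + γ)) μ)
    (hfg : Integrable (fun x => f x * g x ^ γ) μ)
    (hfA : ∫ x, f x ^ (1 + γ) ∂μ = A ^ (1 + γ)) (hgB : ∫ x, g x ^ (1 + γ) ∂μ = B ^ (1 + γ)) :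
    ∫ x, f x * g x ^ γ ∂μ ≤ A * B ^ γ := by
  have hD : 0 ≤ ∫ x, youngDefect γ (f x / A) (g x / B) ∂μ := integral_nonneg fun x =>
    youngDefect_nonneg hγ (div_nonneg (hf0 x) hA.le) (div_nonneg (hg0 x) hB.le)
  rwa [integral_youngDefect_div (by positivity) hA hB hf0 hg0 hf hg hfg hfA hgB, sub_nonneg,
    div_le_one (by positivity)] at hD

theorem ae_eq_const_mul_of_integral_mul_rpow_eq (hγ : 0 < γ) (hA : 0 < A) (hB : 0 < B)
    (hf0 : ∀ x, 0 ≤ f x) (hg0 : ∀ x, 0 ≤ g x)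
    (hf : Integrable (fun x => f x ^ (1 + γ)) μ) (hg : Integrable (fun x => g x ^ (1 + γ)) μ)
    (hfg : Integrable (fun x => f x * g x ^ γ) μ)
    (hfA : ∫ x, f x ^ (1 + γ) ∂μ = A ^ (1 + γ)) (hgB : ∫ x, g x ^ (1 + γ) ∂μ = B ^ (1 + γ))
    (h : ∫ x, f x * g x ^ γ ∂μ = A * B ^ γ) :
    f =ᵐ[μ] fun x => A / B * g x := by
  have hD : ∫ x, youngDefect γ (f x / A) (g x / B) ∂μ = 0 := by
    rw [integral_youngDefect_div (by positivity) hA hB hf0 hg0 hf hg hfg hfA hgB, h,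
      div_self (by positivity), sub_self]
  have hD0 := (integral_eq_zero_iff_of_nonneg (fun x => youngDefect_nonneg hγ
    (div_nonneg (hf0 x) hA.le) (div_nonneg (hg0 x) hB.le))
    (integrable_youngDefect_div hA hB hf0 hg0 hf hg hfg)).1 hD
  filter_upwards [hD0] with x hx
  have hdiv := (youngDefect_eq_zero_iff hγ (div_nonneg (hf0 x) hA.le)
    (div_nonneg (hg0 x) hB.le)).1 hx
  field_simp at hdiv ⊢
  linarith

end Holder

noncomputable def pseudoSphericalScore {α : Type*} [MeasurableSpace α] (μ : Measure α) (γ : ℝ)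
    (f g : α → ℝ) : ℝ :=
  -(∫ x, f x * g x ^ γ ∂μ) / (∫ x, g x ^ (1 + γ) ∂μ) ^ (γ / (1 + γ))

section Score

variable {α : Type*} [MeasurableSpace α] {μ : Measure α} {γ B : ℝ} {f g : α → ℝ}

lemma pseudoSphericalScore_of_integral_eq (hγ : 1 + γ ≠ 0) (hB : 0 ≤ B)
    (hgB : ∫ x, g x ^ (1 + γ) ∂μ = B ^ (1 + γ)) :
    pseudoSphericalScore μ γ f g = -(∫ x, f x * g x ^ γ ∂μ) / B ^ γ := by
  rw [pseudoSphericalScore, hgB, ← Real.rpow_mul hB, mul_div_cancel₀ _ hγ]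

lemma pseudoSphericalScore_self (hγ : 1 + γ ≠ 0) (hB : 0 < B) (hg0 : ∀ x, 0 ≤ g x)
    (hgB : ∫ x, g x ^ (1 + γ) ∂μ = B ^ (1 + γ)) :
    pseudoSphericalScore μ γ g g = -B := by
  have hgg : ∫ x, g x * g x ^ γ ∂μ = B * B ^ γ := by
    simp_rw [← Real.rpow_one_add' (hg0 _) hγ]
    rw [hgB, Real.rpow_one_add' hB.le hγ]
  rw [pseudoSphericalScore_of_integral_eq hγ hB.le hgB, hgg, neg_div,
    mul_div_cancel_right₀ _ (by positivity)]

lemma pseudoSphericalScore_const_mul_right {c : ℝ} (hγ : 1 + γ ≠ 0) (hc : 0 < c)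
    (hg0 : ∀ x, 0 ≤ g x) :
    pseudoSphericalScore μ γ f (fun x => c * g x) = pseudoSphericalScore μ γ f g := by
  have hg : 0 ≤ ∫ x, g x ^ (1 + γ) ∂μ := integral_nonneg fun x => Real.rpow_nonneg (hg0 x) _
  simp only [pseudoSphericalScore, Real.mul_rpow hc.le (hg0 _), mul_left_comm (f _),
    integral_const_mul, Real.mul_rpow (Real.rpow_nonneg hc.le _) hg, ← Real.rpow_mul hc.le,
    mul_div_cancel₀ _ hγ, neg_mul_eq_mul_neg]
  exact mul_div_mul_left _ _ (by positivity)

lemma pseudoSphericalScore_congr_right {g' : α → ℝ} (h : g =ᵐ[μ] g') :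
    pseudoSphericalScore μ γ f g = pseudoSphericalScore μ γ f g' := by
  have h₁ : ∫ x, f x * g x ^ γ ∂μ = ∫ x, f x * g' x ^ γ ∂μ :=
    integral_congr_ae (h.mono fun x hx => by simp only [hx])
  have h₂ : ∫ x, g x ^ (1 + γ) ∂μ = ∫ x, g' x ^ (1 + γ) ∂μ :=
    integral_congr_ae (h.mono fun x hx => by simp only [hx])
  rw [pseudoSphericalScore, pseudoSphericalScore, h₁, h₂]

end Score

theorem pseudo_spherical_score_equality_iff_linearly_dependent_general
    {k : ℕ} (γ : ℝ) (hγ : 0 < γ)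
    (f g : (Fin k → ℝ) → ℝ)
    (hf0 : ∀ x, 0 ≤ f x) (hg0 : ∀ x, 0 ≤ g x)
    (hfint : Integrable (fun x => f x ^ (1 + γ)))
    (hgint : Integrable (fun x => g x ^ (1 + γ)))
    (hfgint : Integrable (fun x => f x * g x ^ γ))
    (hfpos : 0 < ∫ x, f x ^ (1 + γ))
    (hgpos : 0 < ∫ x, g x ^ (1 + γ)) :
    (-(∫ x, f x * f x ^ γ) / (∫ x, f x ^ (1 + γ)) ^ (γ / (1 + γ)) ≤
        -(∫ x, f x * g x ^ γ) / (∫ x, g x ^ (1 + γ)) ^ (γ / (1 + γ))) ∧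
    (-(∫ x, f x * g x ^ γ) / (∫ x, g x ^ (1 + γ)) ^ (γ / (1 + γ)) =
        -(∫ x, f x * f x ^ γ) / (∫ x, f x ^ (1 + γ)) ^ (γ / (1 + γ)) ↔
      ∃ lam : ℝ, 0 < lam ∧ f =ᵐ[volume] (fun x => lam * g x)) := by
  change pseudoSphericalScore volume γ f f ≤ pseudoSphericalScore volume γ f g ∧
    (pseudoSphericalScore volume γ f g = pseudoSphericalScore volume γ f f ↔ _)
  have hγ' : 1 + γ ≠ 0 := by positivity
  set A := (∫ x, f x ^ (1 + γ)) ^ (1 + γ)⁻¹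
  set B := (∫ x, g x ^ (1 + γ)) ^ (1 + γ)⁻¹
  have hA : 0 < A := Real.rpow_pos_of_pos hfpos _
  have hB : 0 < B := Real.rpow_pos_of_pos hgpos _
  have hfA : ∫ x, f x ^ (1 + γ) = A ^ (1 + γ) := (Real.rpow_inv_rpow hfpos.le hγ').symm
  have hgB : ∫ x, g x ^ (1 + γ) = B ^ (1 + γ) := (Real.rpow_inv_rpow hgpos.le hγ').symm
  have hff : pseudoSphericalScore volume γ f f = -A := pseudoSphericalScore_self hγ' hA hf0 hfA
  have hfg : pseudoSphericalScore volume γ f g = -(∫ x, f x * g x ^ γ) / B ^ γ :=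
    pseudoSphericalScore_of_integral_eq hγ' hB.le hgB
  refine ⟨?_, ⟨fun h => ?_, fun ⟨lam, hlam, hae⟩ => ?_⟩⟩
  · rw [hff, hfg, neg_div, neg_le_neg_iff, div_le_iff₀ (by positivity)]
    exact integral_mul_rpow_le hγ hA hB hf0 hg0 hfint hgint hfgint hfA hgB
  · rw [hff, hfg, neg_div, neg_inj, div_eq_iff (by positivity)] at h
    exact ⟨A / B, div_pos hA hB,
      ae_eq_const_mul_of_integral_mul_rpow_eq hγ hA hB hf0 hg0 hfint hgint hfgint hfA hgB h⟩
  · rw [← pseudoSphericalScore_const_mul_right hγ' hlam hg0,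
      pseudoSphericalScore_congr_right hae.symm]

/-- The pseudo-spherical score `S_sphere(f,g) = −(∫f g^γ)/(∫g^{1+γ})^{γ/(1+γ)}` satisfies
`S_sphere(f,g) ≥ S_sphere(f,f)`, with equality iff `f` and `g` are linearly dependent,
i.e. `f = λ·g` a.e. for some `λ > 0`. -/
theorem pseudo_spherical_score_equality_iff_linearly_dependent
    {k : ℕ} (γ : ℝ) (hγ : 0 < γ)
    (f g : (Fin k → ℝ) → ℝ)
    (hfm : Measurable f) (hgm : Measurable g)
    (hf0 : ∀ x, 0 ≤ f x) (hg0 : ∀ x, 0 ≤ g x)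
    (hfint : Integrable (fun x => f x ^ (1 + γ)))
    (hgint : Integrable (fun x => g x ^ (1 + γ)))
    (hfgint : Integrable (fun x => f x * g x ^ γ))
    (hfpos : 0 < ∫ x, f x ^ (1 + γ))
    (hgpos : 0 < ∫ x, g x ^ (1 + γ)) :
    (-(∫ x, f x * f x ^ γ) / (∫ x, f x ^ (1 + γ)) ^ (γ / (1 + γ)) ≤
        -(∫ x, f x * g x ^ γ) / (∫ x, g x ^ (1 + γ)) ^ (γ / (1 + γ))) ∧
    (-(∫ x, f x * g x ^ γ) / (∫ x, g x ^ (1 + γ)) ^ (γ / (1 + γ)) =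
        -(∫ x, f x * f x ^ γ) / (∫ x, f x ^ (1 + γ)) ^ (γ / (1 + γ)) ↔
      ∃ lam : ℝ, 0 < lam ∧ f =ᵐ[volume] (fun x => lam * g x)) :=
  pseudo_spherical_score_equality_iff_linearly_dependent_general γ hγ f g hf0 hg0 hfint hgint hfgint
    hfpos hgpos
end

section
/- Let γ > 0 and let φ : [0,∞) → ℝ satisfy φ(1) = −1 and φ(z) > −z^{1+γ} for all z ≥ 0 with z ≠ 1. Let p and q be probability densities on ℝ^k with ∫p^{1+γ}, ∫q^{1+γ}, ∫p q^γ finite, and with ∫q^{1+γ} > 0 and ∫p^{1+γ} > 0. If the Hölder score satisfies S_φ(p,q) = S_φ(p,p), then p = q almost everywhere. -/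
open MeasureTheory

lemma young_le {γ a u : ℝ} (hγ : 0 < γ) (ha : 0 ≤ a) (hu : 0 ≤ u) :
    (1 + γ) * (a * u ^ γ) ≤ a ^ (1 + γ) + γ * u ^ (1 + γ) := by
  rcases eq_or_lt_of_le hu with rfl | hu'
  · rw [Real.zero_rpow hγ.ne', Real.zero_rpow (by positivity)]
    have : 0 ≤ a ^ (1 + γ) := Real.rpow_nonneg ha _
    nlinarith
  · have hs : (-1 : ℝ) ≤ a / u - 1 := by
      have : 0 ≤ a / u := div_nonneg ha hu'.le
      linarith
    have hb := one_add_mul_self_le_rpow_one_add hs (by linarith : (1:ℝ) ≤ 1 + γ)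
    have h2 : (1 + (a / u - 1)) ^ (1 + γ) = a ^ (1 + γ) / u ^ (1 + γ) := by
      rw [show 1 + (a / u - 1) = a / u by ring, Real.div_rpow ha hu'.le]
    rw [h2] at hb
    have hup : 0 < u ^ (1 + γ) := Real.rpow_pos_of_pos hu' _
    have key : (1 + (1 + γ) * (a / u - 1)) * u ^ (1 + γ) ≤ a ^ (1 + γ) := by
      rw [← div_mul_cancel₀ (a ^ (1 + γ)) hup.ne']
      exact mul_le_mul_of_nonneg_right hb hup.le
    have h1 : u ^ (1 + γ) = u * u ^ γ := by
      rw [Real.rpow_add' hu'.le (by positivity), Real.rpow_one]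
    have hexp : (1 + (1 + γ) * (a / u - 1)) * u ^ (1 + γ) =
        (1 + γ) * (a * u ^ γ) - γ * (u * u ^ γ) := by
      rw [h1]; field_simp; ring
    rw [hexp] at key
    rw [h1]
    linarith [key]

lemma young_lt {γ a u : ℝ} (hγ : 0 < γ) (ha : 0 ≤ a) (hu : 0 ≤ u) (hne : a ≠ u) :
    (1 + γ) * (a * u ^ γ) < a ^ (1 + γ) + γ * u ^ (1 + γ) := by
  rcases eq_or_lt_of_le hu with rfl | hu'
  · rw [Real.zero_rpow hγ.ne', Real.zero_rpow (by positivity)]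
    have : 0 < a ^ (1 + γ) := Real.rpow_pos_of_pos (lt_of_le_of_ne ha (Ne.symm hne)) _
    nlinarith
  · have hs : (-1 : ℝ) ≤ a / u - 1 := by
      have : 0 ≤ a / u := div_nonneg ha hu'.le
      linarith
    have hs' : a / u - 1 ≠ 0 := by
      intro h
      apply hne
      field_simp at h
      linarith
    have hb := one_add_mul_self_lt_rpow_one_add hs hs' (by linarith : (1:ℝ) < 1 + γ)
    have h2 : (1 + (a / u - 1)) ^ (1 + γ) = a ^ (1 + γ) / u ^ (1 + γ) := by
      rw [show 1 + (a / u - 1) = a / u by ring, Real.div_rpow ha hu'.le]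
    rw [h2] at hb
    have hup : 0 < u ^ (1 + γ) := Real.rpow_pos_of_pos hu' _
    have key : (1 + (1 + γ) * (a / u - 1)) * u ^ (1 + γ) < a ^ (1 + γ) := by
      rw [← div_mul_cancel₀ (a ^ (1 + γ)) hup.ne']
      exact mul_lt_mul_of_pos_right hb hup
    have h1 : u ^ (1 + γ) = u * u ^ γ := by
      rw [Real.rpow_add' hu'.le (by positivity), Real.rpow_one]
    have hexp : (1 + (1 + γ) * (a / u - 1)) * u ^ (1 + γ) =
        (1 + γ) * (a * u ^ γ) - γ * (u * u ^ γ) := by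
      rw [h1]; field_simp; ring
    rw [hexp] at key
    rw [h1]
    linarith [key]

/-- Strict properness of the Hölder score on probability densities: if
`φ(1) = −1`, `φ(z) > −z^{1+γ}` for `z ≥ 0`, `z ≠ 1`, and probability densities
`p, q` satisfy `S_φ(p,q) = S_φ(p,p)`, then `p = q` almost everywhere. -/
theorem holder_score_strictly_proper_on_densities
    {k : ℕ} (γ : ℝ) (hγ : 0 < γ)
    (φ : ℝ → ℝ) (hφ1 : φ 1 = -1)
    (hφ : ∀ z : ℝ, 0 ≤ z → z ≠ 1 → -(z ^ (1 + γ)) < φ z)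
    (p q : (Fin k → ℝ) → ℝ)
    (hpm : Measurable p) (hqm : Measurable q)
    (hp0 : ∀ x, 0 ≤ p x) (hq0 : ∀ x, 0 ≤ q x)
    (hpi : Integrable p) (hqi : Integrable q)
    (hp1 : (∫ x, p x) = 1) (hq1 : (∫ x, q x) = 1)
    (hpint : Integrable (fun x => p x ^ (1 + γ)))
    (hqint : Integrable (fun x => q x ^ (1 + γ)))
    (hpqint : Integrable (fun x => p x * q x ^ γ))
    (hppos : 0 < ∫ x, p x ^ (1 + γ))
    (hqpos : 0 < ∫ x, q x ^ (1 + γ))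
    (heq : φ ((∫ x, p x * q x ^ γ) / (∫ x, q x ^ (1 + γ))) * (∫ x, q x ^ (1 + γ)) =
        φ ((∫ x, p x * p x ^ γ) / (∫ x, p x ^ (1 + γ))) * (∫ x, p x ^ (1 + γ))) :
    p =ᵐ[volume] q := by
  have hid : (∫ x, p x * p x ^ γ) = ∫ x, p x ^ (1 + γ) := by
    apply integral_congr_ae (Filter.Eventually.of_forall fun x => ?_)
    rw [Real.rpow_add' (hp0 x) (by positivity), Real.rpow_one]
  rw [hid, div_self hppos.ne', hφ1] at heq
  set A := ∫ x, p x * q x ^ γ with hA_def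
  set B := ∫ x, q x ^ (1 + γ) with hB_def
  set C := ∫ x, p x ^ (1 + γ) with hC_def
  have hA0 : 0 ≤ A := integral_nonneg fun x => mul_nonneg (hp0 x) (Real.rpow_nonneg (hq0 x) _)
  have hz0 : 0 ≤ A / B := div_nonneg hA0 hqpos.le
  have hφz : -((A / B) ^ (1 + γ)) ≤ φ (A / B) := by
    by_cases hz1 : A / B = 1
    · rw [hz1, hφ1, Real.one_rpow]
    · exact (hφ _ hz0 hz1).le
  have hBγ : 0 < B ^ γ := Real.rpow_pos_of_pos hqpos γ
  have key1 : C * B ^ γ ≤ A ^ (1 + γ) := by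
    have h := mul_le_mul_of_nonneg_right hφz hqpos.le
    rw [heq] at h
    have hz : (A / B) ^ (1 + γ) = A ^ (1 + γ) / B ^ (1 + γ) :=
      Real.div_rpow hA0 hqpos.le _
    have hsplit : B ^ (1 + γ) = B * B ^ γ := by
      rw [Real.rpow_add hqpos, Real.rpow_one]
    rw [hz, hsplit, neg_mul] at h
    have hred : A ^ (1 + γ) / (B * B ^ γ) * B = A ^ (1 + γ) / B ^ γ := by
      field_simp
    rw [hred] at h
    have : C ≤ A ^ (1 + γ) / B ^ γ := by linarith
    calc C * B ^ γ ≤ A ^ (1 + γ) / B ^ γ * B ^ γ :=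
          mul_le_mul_of_nonneg_right this hBγ.le
      _ = A ^ (1 + γ) := div_mul_cancel₀ _ hBγ.ne'
  set c := C ^ (1 + γ)⁻¹ with hc_def
  set b := B ^ (1 + γ)⁻¹ with hb_def
  have hc : 0 < c := Real.rpow_pos_of_pos hppos _
  have hb : 0 < b := Real.rpow_pos_of_pos hqpos _
  have hcC : c ^ (1 + γ) = C := Real.rpow_inv_rpow hppos.le (by positivity)
  have hbB : b ^ (1 + γ) = B := Real.rpow_inv_rpow hqpos.le (by positivity)
  have hbγ : (b ^ γ) ^ (1 + γ) = B ^ γ := by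
    rw [← Real.rpow_mul hb.le, mul_comm, Real.rpow_mul hb.le, hbB]
  have hcbpos : 0 < c * b ^ γ := by positivity
  have hcb : (c * b ^ γ) ^ (1 + γ) = C * B ^ γ := by
    rw [Real.mul_rpow hc.le (Real.rpow_nonneg hb.le _), hcC, hbγ]
  have hAcb : c * b ^ γ ≤ A := by
    by_contra hlt
    push_neg at hlt
    have h2 := Real.rpow_lt_rpow hA0 hlt (by positivity : (0:ℝ) < 1 + γ)
    rw [hcb] at h2
    linarith
  set g : (Fin k → ℝ) → ℝ := fun x =>
    p x ^ (1 + γ) / C + γ * (q x ^ (1 + γ) / B)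
      - (1 + γ) * ((p x * q x ^ γ) / (c * b ^ γ)) with hg_def
  have hgy : ∀ x, g x = (p x / c) ^ (1 + γ) + γ * ((q x / b) ^ (1 + γ))
      - (1 + γ) * ((p x / c) * (q x / b) ^ γ) := by
    intro x
    rw [hg_def]
    rw [Real.div_rpow (hp0 x) hc.le, hcC, Real.div_rpow (hq0 x) hb.le, hbB,
      Real.div_rpow (hq0 x) hb.le, div_mul_div_comm]
  have hg0 : ∀ x, 0 ≤ g x := by
    intro x
    rw [hgy x]
    have := young_le hγ (div_nonneg (hp0 x) hc.le) (div_nonneg (hq0 x) hb.le)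
    linarith
  have i1 : Integrable (fun x => p x ^ (1 + γ) / C) := hpint.div_const C
  have i2 : Integrable (fun x => γ * (q x ^ (1 + γ) / B)) := (hqint.div_const B).const_mul γ
  have i3 : Integrable (fun x => (1 + γ) * ((p x * q x ^ γ) / (c * b ^ γ))) :=
    (hpqint.div_const _).const_mul _
  have hgint : Integrable g := (i1.add i2).sub i3
  have hgintegral : ∫ x, g x = 1 + γ - (1 + γ) * (A / (c * b ^ γ)) := by
    have e0 : ∫ x, g x = (∫ x, (p x ^ (1 + γ) / C + γ * (q x ^ (1 + γ) / B)))
        - ∫ x, (1 + γ) * ((p x * q x ^ γ) / (c * b ^ γ)) := integral_sub (i1.add i2) i3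
    rw [e0, integral_add i1 i2, integral_const_mul, integral_const_mul,
      integral_div, integral_div, integral_div, div_self hppos.ne', div_self hqpos.ne',
      mul_one]
  have hle : ∫ x, g x ≤ 0 := by
    rw [hgintegral]
    have h1 : (1 : ℝ) ≤ A / (c * b ^ γ) := (one_le_div hcbpos).mpr hAcb
    nlinarith
  have hzero : ∫ x, g x = 0 := le_antisymm hle (integral_nonneg hg0)
  have hg_ae : g =ᵐ[volume] 0 := (integral_eq_zero_iff_of_nonneg hg0 hgint).mp hzero
  have hpq : ∀ᵐ x, p x / c = q x / b := by
    filter_upwards [hg_ae] with x hx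
    by_contra hne
    have h2 := young_lt hγ (div_nonneg (hp0 x) hc.le) (div_nonneg (hq0 x) hb.le) hne
    rw [hgy x] at hx
    simp only [Pi.zero_apply] at hx
    linarith
  have hcb_eq : c = b := by
    have hint : ∫ x, p x / c = ∫ x, q x / b := integral_congr_ae hpq
    rw [integral_div, integral_div, hp1, hq1] at hint
    field_simp at hint
    linarith
  filter_upwards [hpq] with x hx
  rw [hcb_eq] at hx
  exact (div_left_inj' hb.ne').mp hx
end

section
/- Let γ > 0 and let φ : [0,∞) → ℝ satisfy φ(1) = −1 and φ(z) ≥ −z^{1+γ} for all z ≥ 0. Let f and g be nonnegative measurable functions on ℝ^k with ∫g^{1+γ} > 0 and ∫f g^γ ∈ (0,∞). Then for every c > 0, S_φ(f, c·g) ≥ −(∫f g^γ)^{1+γ}/(∫g^{1+γ})^γ = −(−S_sphere(f,g))^{1+γ}, and equality holds when c = (∫f g^γ)/(∫g^{1+γ}). -/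
open MeasureTheory

/-- For every `c > 0`, the Hölder score of the scaled model satisfies
`S_φ(f, c·g) ≥ −(∫f g^γ)^{1+γ}/(∫g^{1+γ})^γ = −(−S_sphere(f,g))^{1+γ}`, with equality
when `c = (∫f g^γ)/(∫g^{1+γ})`. -/
theorem holder_score_scaled_lower_bound
    {k : ℕ} (γ : ℝ) (hγ : 0 < γ)
    (φ : ℝ → ℝ) (hφ1 : φ 1 = -1)
    (hφ : ∀ z : ℝ, 0 ≤ z → -(z ^ (1 + γ)) ≤ φ z)
    (f g : (Fin k → ℝ) → ℝ)
    (hfm : Measurable f) (hgm : Measurable g)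
    (hf0 : ∀ x, 0 ≤ f x) (hg0 : ∀ x, 0 ≤ g x)
    (hgint : Integrable (fun x => g x ^ (1 + γ)))
    (hgpos : 0 < ∫ x, g x ^ (1 + γ))
    (hfgint : Integrable (fun x => f x * g x ^ γ))
    (hfgpos : 0 < ∫ x, f x * g x ^ γ) :
    (∀ c : ℝ, 0 < c →
      -((∫ x, f x * g x ^ γ) ^ (1 + γ)) / (∫ x, g x ^ (1 + γ)) ^ γ ≤
        φ ((∫ x, f x * (c * g x) ^ γ) / (∫ x, (c * g x) ^ (1 + γ))) *
          (∫ x, (c * g x) ^ (1 + γ))) ∧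
    (-((∫ x, f x * g x ^ γ) ^ (1 + γ)) / (∫ x, g x ^ (1 + γ)) ^ γ =
      -((-(-(∫ x, f x * g x ^ γ) / (∫ x, g x ^ (1 + γ)) ^ (γ / (1 + γ)))) ^ (1 + γ))) ∧
    (φ ((∫ x, f x * (((∫ x, f x * g x ^ γ) / (∫ x, g x ^ (1 + γ))) * g x) ^ γ) /
          (∫ x, (((∫ x, f x * g x ^ γ) / (∫ x, g x ^ (1 + γ))) * g x) ^ (1 + γ))) *
        (∫ x, (((∫ x, f x * g x ^ γ) / (∫ x, g x ^ (1 + γ))) * g x) ^ (1 + γ)) =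
      -((∫ x, f x * g x ^ γ) ^ (1 + γ)) / (∫ x, g x ^ (1 + γ)) ^ γ) := by
  set A := ∫ x, f x * g x ^ γ with hA
  set B := ∫ x, g x ^ (1 + γ) with hB
  have h1γ : (0:ℝ) < 1 + γ := by linarith
  have key1 : ∀ c : ℝ, 0 < c →
      (∫ x, f x * (c * g x) ^ γ) = c ^ γ * A := by
    intro c hc
    rw [hA, ← integral_const_mul]
    congr 1; funext x
    rw [Real.mul_rpow hc.le (hg0 x)]; ring
  have key2 : ∀ c : ℝ, 0 < c →
      (∫ x, (c * g x) ^ (1 + γ)) = c ^ (1 + γ) * B := by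
    intro c hc
    rw [hB, ← integral_const_mul]
    congr 1; funext x
    rw [Real.mul_rpow hc.le (hg0 x)]
  have harg : ∀ c : ℝ, 0 < c →
      (c ^ γ * A) / (c ^ (1 + γ) * B) = A / (c * B) := by
    intro c hc
    have h1 : c ^ (1 + γ) = c * c ^ γ := by
      rw [Real.rpow_add hc, Real.rpow_one]
    have hcγ : (0:ℝ) < c ^ γ := Real.rpow_pos_of_pos hc γ
    rw [h1, mul_comm c (c ^ γ), mul_assoc, mul_div_mul_left _ _ hcγ.ne']
  have hval : ∀ c : ℝ, 0 < c →
      (A / (c * B)) ^ (1 + γ) * (c ^ (1 + γ) * B) = A ^ (1 + γ) / B ^ γ := by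
    intro c hc
    rw [Real.div_rpow hfgpos.le (by positivity), Real.mul_rpow hc.le hgpos.le]
    have hB1 : B ^ (1 + γ) = B * B ^ γ := by
      rw [Real.rpow_add hgpos, Real.rpow_one]
    have hc1 : (0:ℝ) < c ^ (1 + γ) := Real.rpow_pos_of_pos hc _
    have hBγ : (0:ℝ) < B ^ γ := Real.rpow_pos_of_pos hgpos _
    rw [hB1]
    field_simp
  refine ⟨?_, ?_, ?_⟩
  · intro c hc
    rw [key1 c hc, key2 c hc, harg c hc]
    have hz : (0:ℝ) ≤ A / (c * B) := by positivity
    have h := mul_le_mul_of_nonneg_right (hφ _ hz)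
      (le_of_lt (by positivity : (0:ℝ) < c ^ (1 + γ) * B))
    calc -(A ^ (1 + γ)) / B ^ γ
        = -((A / (c * B)) ^ (1 + γ)) * (c ^ (1 + γ) * B) := by
          rw [neg_mul, hval c hc, neg_div]
      _ ≤ φ (A / (c * B)) * (c ^ (1 + γ) * B) := h
  · have h1 : -(-A / B ^ (γ / (1 + γ))) = A / B ^ (γ / (1 + γ)) := by
      rw [neg_div, neg_neg]
    rw [h1, Real.div_rpow hfgpos.le (by positivity),
      ← Real.rpow_mul hgpos.le, div_mul_cancel₀ _ h1γ.ne', neg_div]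
  · have hc0 : (0:ℝ) < A / B := by positivity
    rw [key1 _ hc0, key2 _ hc0, harg _ hc0]
    have hA1 : A / (A / B * B) = 1 := by
      rw [div_mul_cancel₀ _ hgpos.ne', div_self hfgpos.ne']
    rw [hA1, hφ1]
    have := hval _ hc0
    rw [hA1, Real.one_rpow, one_mul] at this
    rw [neg_one_mul, this, neg_div]
end

section
/- (Lemma 1) Let γ > 0 and let φ : [0,∞) → ℝ satisfy φ(1) = −1 and φ(z) > −z^{1+γ} for all z ≠ 1. For each u > 0 define ψ_u(z) = z^{1+γ}·φ(u/z) for z > 0, and suppose that for every u > 0 the function ψ_u is strictly decreasing on the open interval (0, u). Let x₁,…,xₙ ∈ ℝ^k, let p_θ be a probability density on ℝ^k with ∫p_θ^{1+γ} ∈ (0,∞) and (1/n)∑_{i=1}^n p_θ(x_i)^γ > 0, and define c(θ) = ((1/n)∑_{i=1}^n p_θ(x_i)^γ)/∫p_θ^{1+γ}. Then the problem of minimizing over c ∈ (0,1] the empirical Hölder score S_φ(p̃, c·p_θ) = φ((1/n)∑_i p_θ(x_i)^γ/(c∫p_θ^{1+γ}))·c^{1+γ}∫p_θ^{1+γ}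 has the unique optimal solution c = min{1, c(θ)}. -/
open MeasureTheory

/-- (Lemma 1) For `φ` with `φ(1) = −1`, `φ(z) > −z^{1+γ}` for `z ≠ 1`, and `ψ_u(z) =
z^{1+γ}φ(u/z)` strictly decreasing on `(0,u)` for each `u > 0`, the problem of minimizing
the empirical Hölder score `S_φ(p̃, c·p_θ) = φ(A/(c·B))·c^{1+γ}·B` over `c ∈ (0,1]`,
where `A = (1/n)∑ p_θ(x_i)^γ` and `B = ∫ p_θ^{1+γ}`, has the unique optimal solution
`c = min{1, c(θ)}` with `c(θ) = A/B`. -/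
theorem empirical_holder_enlarged_model_optimal_c
    {k n : ℕ} (hn : 0 < n) (γ : ℝ) (hγ : 0 < γ)
    (φ : ℝ → ℝ) (hφ1 : φ 1 = -1)
    (hφ : ∀ z : ℝ, 0 ≤ z → z ≠ 1 → -(z ^ (1 + γ)) < φ z)
    (hψ : ∀ u : ℝ, 0 < u →
      StrictAntiOn (fun z : ℝ => z ^ (1 + γ) * φ (u / z)) (Set.Ioo 0 u))
    (x : Fin n → (Fin k → ℝ))
    (pθ : (Fin k → ℝ) → ℝ)
    (hpθm : Measurable pθ) (hpθ0 : ∀ y, 0 ≤ pθ y)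
    (hpθi : Integrable pθ) (hpθ1 : (∫ y, pθ y) = 1)
    (hBint : Integrable (fun y => pθ y ^ (1 + γ)))
    (A B : ℝ)
    (hA : A = (1 / (n : ℝ)) * ∑ i, pθ (x i) ^ γ)
    (hB : B = ∫ y, pθ y ^ (1 + γ))
    (hApos : 0 < A) (hBpos : 0 < B)
    (cθ : ℝ) (hcθ : cθ = A / B)
    (F : ℝ → ℝ) (hF : ∀ c, F c = φ (A / (c * B)) * (c ^ (1 + γ) * B)) :
    min 1 cθ ∈ Set.Ioc (0 : ℝ) 1 ∧
    (∀ c ∈ Set.Ioc (0 : ℝ) 1, F (min 1 cθ) ≤ F c) ∧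
    (∀ c ∈ Set.Ioc (0 : ℝ) 1, c ≠ min 1 cθ → F (min 1 cθ) < F c) := by

  have hcθpos : 0 < cθ := hcθ ▸ div_pos hApos hBpos
  have hAc : ∀ c : ℝ, c ≠ 0 → A / (c * B) = cθ / c := by
    intro c hc
    rw [hcθ, mul_comm, ← div_div]
  have key : ∀ c : ℝ, 0 < c → c ≠ cθ → F cθ < F c := by
    intro c hc hne
    rw [hF, hF, hAc c hc.ne', hAc cθ hcθpos.ne', div_self hcθpos.ne', hφ1]
    have h1 : cθ / c ≠ 1 := by
      intro h
      rw [div_eq_one_iff_eq hc.ne'] at h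
      exact hne h.symm
    have h2 := hφ (cθ / c) (by positivity) h1
    have h3 : -1 * (cθ ^ (1 + γ) * B) = -((cθ / c) ^ (1 + γ)) * (c ^ (1 + γ) * B) := by
      rw [Real.div_rpow hcθpos.le hc.le]
      have hcp : c ^ (1 + γ) ≠ 0 := by positivity
      field_simp
    rw [h3]
    exact mul_lt_mul_of_pos_right h2 (by positivity)
  rcases le_or_gt cθ 1 with h | h
  · rw [min_eq_right h]
    refine ⟨⟨hcθpos, h⟩, ?_, ?_⟩
    · intro c hc
      rcases eq_or_ne c cθ with rfl | hne
      · exact le_refl _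
      · exact (key c hc.1 hne).le
    · intro c hc hne
      exact key c hc.1 hne
  · rw [min_eq_left h.le]
    have hstrict : ∀ c ∈ Set.Ioc (0 : ℝ) 1, c ≠ 1 → F 1 < F c := by
      intro c hc hne
      have hclt : c < 1 := lt_of_le_of_ne hc.2 hne
      have hmem1 : (1 : ℝ) ∈ Set.Ioo (0 : ℝ) cθ := ⟨one_pos, h⟩
      have hmemc : c ∈ Set.Ioo (0 : ℝ) cθ := ⟨hc.1, hclt.trans h⟩
      have hψlt := hψ cθ hcθpos hmemc hmem1 hclt
      simp only at hψlt
      have e1 : F 1 = (1 : ℝ) ^ (1 + γ) * φ (cθ / 1) * B := by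
        rw [hF, hAc 1 one_ne_zero]; ring
      have e2 : F c = c ^ (1 + γ) * φ (cθ / c) * B := by
        rw [hF, hAc c hc.1.ne']; ring
      rw [e1, e2]
      exact mul_lt_mul_of_pos_right hψlt hBpos
    refine ⟨⟨one_pos, le_refl _⟩, ?_, hstrict⟩
    intro c hc
    rcases eq_or_ne c 1 with rfl | hne
    · exact le_refl _
    · exact (hstrict c hc hne).le
end

section
/- (Theorem 1) Let γ > 0 and let φ : [0,∞) → ℝ satisfy φ(1) = −1, φ(z) > −z^{1+γ} for z ≠ 1, and for every u > 0 the function ψ_u(z) = z^{1+γ}φ(u/z) is strictly decreasing on (0,u). Let Θ ⊆ ℝ^d be open, let {p_θ : θ ∈ Θ} be a family of probability densities on ℝ^k with ∫p_θ^{1+γ} ∈ (0,∞) for all θ, let x₁,…,xₙ ∈ ℝ^k, and let (ĉ, θ̂) be an optimal solution of the problem of minimizing S_φ(p̃, c·p_θ) over c ∈ (0,1], θ ∈ Θ. Suppose c(θ) := ((1/n)∑_i p_θ(x_i)^γ)/∫p_θ^{1+γ} is continuous in a neighborhood of θ̂. If 0 < ĉ < 1, then θ̂ is a local optimal solution of the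 problem of minimizing S_sphere(p̃, p_θ) over θ ∈ Θ. Otherwise (ĉ = 1), θ̂ is an optimal solution of the problem of minimizing S_φ(p̃, p_θ) over θ ∈ Θ. -/
open MeasureTheory

/-- (Theorem 1) Let `(ĉ, θ̂)` be an optimal solution of minimizing the empirical Hölder
score `S_φ(p̃, c·p_θ) = φ(A(θ)/(c·B(θ)))·c^{1+γ}·B(θ)` over `c ∈ (0,1]`, `θ ∈ Θ`, where
`A(θ) = (1/n)∑ p_θ(x_i)^γ` and `B(θ) = ∫ p_θ^{1+γ}`, and suppose `c(θ) = A(θ)/B(θ)` is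
continuous in a neighborhood of `θ̂`. If `0 < ĉ < 1` then `θ̂` is a local optimal
solution of minimizing the empirical pseudo-spherical score `−A(θ)/B(θ)^{γ/(1+γ)}`
over `Θ`; otherwise (`ĉ = 1`) `θ̂` minimizes `S_φ(p̃, p_θ)` over `Θ`. -/
theorem empirical_holder_enlarged_model_theorem1
    {k d n : ℕ} (hn : 0 < n) (γ : ℝ) (hγ : 0 < γ)
    (φ : ℝ → ℝ) (hφ1 : φ 1 = -1)
    (hφ : ∀ z : ℝ, 0 ≤ z → z ≠ 1 → -(z ^ (1 + γ)) < φ z)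
    (hψ : ∀ u : ℝ, 0 < u →
      StrictAntiOn (fun z : ℝ => z ^ (1 + γ) * φ (u / z)) (Set.Ioo 0 u))
    (Θ : Set (Fin d → ℝ)) (hΘ : IsOpen Θ)
    (p : (Fin d → ℝ) → (Fin k → ℝ) → ℝ)
    (hpm : ∀ θ, Measurable (p θ)) (hp0 : ∀ θ x, 0 ≤ p θ x)
    (hpi : ∀ θ ∈ Θ, Integrable (p θ)) (hp1 : ∀ θ ∈ Θ, (∫ x, p θ x) = 1)
    (hpint : ∀ θ ∈ Θ, Integrable (fun x => p θ x ^ (1 + γ)))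
    (x : Fin n → (Fin k → ℝ))
    (A B : (Fin d → ℝ) → ℝ)
    (hA : ∀ θ, A θ = (1 / (n : ℝ)) * ∑ i, p θ (x i) ^ γ)
    (hB : ∀ θ, B θ = ∫ x', p θ x' ^ (1 + γ))
    (hBpos : ∀ θ ∈ Θ, 0 < B θ)
    (F : ℝ → (Fin d → ℝ) → ℝ)
    (hF : ∀ c θ, F c θ = φ (A θ / (c * B θ)) * (c ^ (1 + γ) * B θ))
    (creg : (Fin d → ℝ) → ℝ) (hcreg : ∀ θ, creg θ = A θ / B θ)
    (chat : ℝ) (θhat : Fin d → ℝ)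
    (hchat : chat ∈ Set.Ioc (0 : ℝ) 1) (hθhat : θhat ∈ Θ)
    (hopt : ∀ c ∈ Set.Ioc (0 : ℝ) 1, ∀ θ ∈ Θ, F chat θhat ≤ F c θ)
    (hcont : ∃ U ∈ nhds θhat, ContinuousOn creg U) :
    (chat < 1 →
      ∃ V ∈ nhds θhat, ∀ θ ∈ V ∩ Θ,
        -(A θhat) / (B θhat) ^ (γ / (1 + γ)) ≤ -(A θ) / (B θ) ^ (γ / (1 + γ))) ∧
    (chat = 1 → ∀ θ ∈ Θ, F 1 θhat ≤ F 1 θ) := by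
  constructor
  · intro hc1
    have h1γ : (0:ℝ) < 1 + γ := by linarith
    have hAnn : ∀ θ', 0 ≤ A θ' := by
      intro θ'
      rw [hA]
      apply mul_nonneg (by positivity)
      exact Finset.sum_nonneg fun i _ => Real.rpow_nonneg (hp0 θ' (x i)) γ
    -- lower bound for the Hölder objective
    have lower : ∀ θ' ∈ Θ, ∀ c : ℝ, 0 < c → -(A θ' ^ (1+γ) / B θ' ^ γ) ≤ F c θ' := by
      intro θ' hθ' c hc
      have hb := hBpos θ' hθ'
      have ha := hAnn θ'
      have hcB : 0 < c ^ (1+γ) * B θ' := mul_pos (Real.rpow_pos_of_pos hc _) hb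
      set z := A θ' / (c * B θ') with hz
      have hz0 : 0 ≤ z := div_nonneg ha (mul_pos hc hb).le
      have key : -(z ^ (1+γ)) ≤ φ z := by
        rcases eq_or_ne z 1 with h | h
        · rw [h, hφ1, Real.one_rpow]
        · exact (hφ z hz0 h).le
      rw [hF]
      have h2 : -(z ^ (1+γ)) * (c ^ (1+γ) * B θ') ≤ φ z * (c ^ (1+γ) * B θ') :=
        mul_le_mul_of_nonneg_right key hcB.le
      refine le_trans (le_of_eq ?_) h2
      rw [hz, Real.div_rpow ha (mul_pos hc hb).le, Real.mul_rpow hc.le hb.le]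
      have hBγ : B θ' ^ (1+γ) = B θ' ^ γ * B θ' := by
        rw [add_comm, Real.rpow_add hb, Real.rpow_one]
      have hcne : c ^ (1+γ) ≠ 0 := (Real.rpow_pos_of_pos hc _).ne'
      have hbγ : (0:ℝ) < B θ' ^ γ := Real.rpow_pos_of_pos hb _
      rw [hBγ]
      field_simp
    -- value of F at c = creg θ'
    have valF : ∀ θ' ∈ Θ, 0 < A θ' → F (creg θ') θ' = -(A θ' ^ (1+γ) / B θ' ^ γ) := by
      intro θ' hθ' ha
      have hb := hBpos θ' hθ'
      rw [hF, hcreg]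
      have harg : A θ' / (A θ' / B θ' * B θ') = 1 := by
        rw [div_mul_cancel₀ _ hb.ne', div_self ha.ne']
      rw [harg, hφ1, Real.div_rpow ha.le hb.le]
      have hBγ : B θ' ^ (1+γ) = B θ' ^ γ * B θ' := by
        rw [add_comm, Real.rpow_add hb, Real.rpow_one]
      have hbγ : (0:ℝ) < B θ' ^ γ := Real.rpow_pos_of_pos hb _
      rw [hBγ]
      field_simp
    -- creg θhat < 1
    have hult : creg θhat < 1 := by
      by_contra h
      push_neg at h
      have hu : (0:ℝ) < creg θhat := lt_of_lt_of_le one_pos h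
      set c' := (chat + 1)/2 with hc'
      have hc'lt1 : c' < 1 := by rw [hc']; linarith
      have hc'gt : chat < c' := by rw [hc']; linarith [hchat.1]
      have hm1 : chat ∈ Set.Ioo (0:ℝ) (creg θhat) := ⟨hchat.1, lt_of_lt_of_le hc1 h⟩
      have hm2 : c' ∈ Set.Ioo (0:ℝ) (creg θhat) :=
        ⟨lt_trans hchat.1 hc'gt, lt_of_lt_of_le hc'lt1 h⟩
      have hanti := hψ (creg θhat) hu hm1 hm2 hc'gt
      simp only at hanti
      have hrel : ∀ c : ℝ, 0 < c → F c θhat = (c ^ (1+γ) * φ (creg θhat / c)) * B θhat := by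
        intro c hc
        rw [hF, hcreg]
        have : A θhat / B θhat / c = A θhat / (c * B θhat) := by
          rw [div_div, mul_comm]
        rw [this]
        ring
      have hlt : F c' θhat < F chat θhat := by
        rw [hrel c' hm2.1, hrel chat hm1.1]
        exact mul_lt_mul_of_pos_right hanti (hBpos θhat hθhat)
      exact absurd (hopt c' ⟨hm2.1, hc'lt1.le⟩ θhat hθhat) (not_le.mpr hlt)
    -- pick neighborhood where creg < 1
    obtain ⟨U, hU, hcontU⟩ := hcont
    have hca : ContinuousAt creg θhat := hcontU.continuousAt hU
    refine ⟨creg ⁻¹' Set.Iio 1, hca.preimage_mem_nhds (Iio_mem_nhds hult), ?_⟩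
    rintro θ ⟨hθV, hθΘ⟩
    have hb := hBpos θ hθΘ
    have hbhat := hBpos θhat hθhat
    rcases eq_or_lt_of_le (hAnn θ) with ha | ha
    · -- A θ = 0
      rw [← ha, neg_zero, zero_div]
      apply div_nonpos_of_nonpos_of_nonneg
      · exact neg_nonpos.mpr (hAnn θhat)
      · exact Real.rpow_nonneg hbhat.le _
    · have hcregθ : creg θ ∈ Set.Ioc (0:ℝ) 1 := by
        constructor
        · rw [hcreg]; exact div_pos ha hb
        · exact le_of_lt hθV
      have hchain : -(A θhat ^ (1+γ) / B θhat ^ γ) ≤ -(A θ ^ (1+γ) / B θ ^ γ) := by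
        calc -(A θhat ^ (1+γ) / B θhat ^ γ) ≤ F chat θhat :=
              lower θhat hθhat chat hchat.1
          _ ≤ F (creg θ) θ := hopt (creg θ) hcregθ θ hθΘ
          _ = -(A θ ^ (1+γ) / B θ ^ γ) := valF θ hθΘ ha
      have hconv : ∀ s t : ℝ, 0 ≤ s → 0 < t →
          s ^ (1+γ) / t ^ γ = (s / t ^ (γ/(1+γ))) ^ (1+γ) := by
        intro s t hs ht
        rw [Real.div_rpow hs (Real.rpow_nonneg ht.le _), ← Real.rpow_mul ht.le,
          div_mul_cancel₀ _ h1γ.ne']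
      rw [hconv _ _ (hAnn θhat) hbhat, hconv _ _ ha.le hb] at hchain
      rw [neg_div, neg_div, neg_le_neg_iff]
      by_contra hcon
      push_neg at hcon
      have hnn : 0 ≤ A θhat / B θhat ^ (γ/(1+γ)) :=
        div_nonneg (hAnn θhat) (Real.rpow_nonneg hbhat.le _)
      have hlt := Real.rpow_lt_rpow hnn hcon h1γ
      rw [neg_le_neg_iff] at hchain
      exact absurd hchain (not_le.mpr hlt)
  · intro hc1 θ hθ
    have := hopt 1 ⟨one_pos, le_refl 1⟩ θ hθ
    rwa [hc1] at this
end

section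
/- (Theorem 2, quantitative form) Let γ > 0, let Θ ⊆ ℝ^d be open, let {p_θ : θ ∈ Θ} be probability densities on ℝ^k, let p₀ = p_{θ₀} for some θ₀ ∈ Θ, let w be a probability density, let c₀ ∈ (0,1], and set p = c₀p₀ + (1−c₀)w. For ξ = (c,θ) ∈ (0,1]×Θ define f₀(ξ) = S_power(c₀p₀, c·p_θ) and f₁(ξ) = S_power(p, c·p_θ), so that f₁(ξ) = f₀(ξ) − (1+γ)(1−c₀)c^γ ε_θ with ε_θ = ∫w p_θ^γ. Let ξ₁ = (c₁,θ₁) be a minimizer of f₁ over (0,1]×Θ and ε₁ = ε_{θ₁}, and let ξ₀ = (c₀,θ₀), which minimizes f₀ over (0,1]×Θ. Let N be a convex set containing {ξ ∈ (0,1]×Θ : f₁(ξ) ≤ f₁(ξ₁) + (1+γ)ε₁}, suppose f₀ is twice differentiable on N, and suppose there is δ > 0 such that every eigenvalue of the Hessian of f₀ at every point of N is greater than δ. Then ξ₀, ξ₁ ∈ N and ‖ξ₁ − ξ₀‖ ≤ √(2(1+γ)ε₁/δ). -/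
/-!
The contamination term `(1 + γ) (1 - c₀) c ^ γ ε θ` lies between `0` and `(1 + γ) ε θ`. Hence both
minimizers lie in the sublevel set, so in `N`, and `f₀ ξ₁ ≤ f₀ ξ₀ + (1 + γ) ε₁`. On the segment
`[ξ₀, ξ₁] ⊆ N` the Hessian bound gives `f₀ ξ₁ ≥ f₀ ξ₀ + Df₀(ξ₀)(ξ₁ - ξ₀) + δ ‖ξ₁ - ξ₀‖² / 2`, and the
first-order term is nonnegative because `ξ₀` minimizes `f₀` on `(0, 1] × Θ`, inside which `ξ₀` can
move a little towards `ξ₁` (the first factor is convex, `Θ` is open).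
-/

open MeasureTheory Set Filter Topology

theorem differentiableAt_of_fderiv_ne_zero {E F : Type*} [NormedAddCommGroup E] [NormedSpace ℝ E]
    [NormedAddCommGroup F] [NormedSpace ℝ F] {f : E → F} {x : E} (h : fderiv ℝ f x ≠ 0) :
    DifferentiableAt ℝ f x := by
  by_contra hf
  exact h (fderiv_zero_of_not_differentiableAt hf)

/-- `g' = φ` is only required where `φ ≠ 0`, the shape that survives the junk value `fderiv = 0`
at points of non-differentiability; the strictly increasing `φ` vanishes at most once, so the
fundamental theorem of calculus with a countable exceptional set still applies. -/
theorem mul_sub_add_sq_le_sub_of_hasDerivAt_of_ne_zero {g φ φ' : ℝ → ℝ} {a b K : ℝ}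
    (hab : a ≤ b) (hK : 0 < K) (hg : ContinuousOn g (Icc a b))
    (hφ : ∀ t ∈ Icc a b, HasDerivAt φ (φ' t) t) (hKφ' : ∀ t ∈ Icc a b, K ≤ φ' t)
    (hgφ : ∀ t ∈ Ioo a b, φ t ≠ 0 → HasDerivAt g (φ t) t) :
    φ a * (b - a) + K / 2 * (b - a) ^ 2 ≤ g b - g a := by
  have hφc : ContinuousOn φ (Icc a b) := fun t ht => (hφ t ht).continuousAt.continuousWithinAt
  have hgrowth : ∀ s ∈ Icc a b, ∀ t ∈ Icc a b, s ≤ t → K * (t - s) ≤ φ t - φ s := by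
    refine (convex_Icc a b).mul_sub_le_image_sub_of_le_deriv hφc ?_ ?_ <;>
      rw [interior_Icc] <;> intro t ht
    · exact (hφ t (Ioo_subset_Icc_self ht)).differentiableAt.differentiableWithinAt
    · rw [(hφ t (Ioo_subset_Icc_self ht)).deriv]
      exact hKφ' t (Ioo_subset_Icc_self ht)
  have hzeros : (Icc a b ∩ φ ⁻¹' {0}).Subsingleton := by
    intro s ⟨hs, hs0⟩ t ⟨ht, ht0⟩
    by_contra hst
    rcases lt_or_gt_of_ne hst with h | h
    · nlinarith [hgrowth s hs t ht h.le, mem_singleton_iff.mp hs0, mem_singleton_iff.mp ht0]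
    · nlinarith [hgrowth t ht s hs h.le, mem_singleton_iff.mp hs0, mem_singleton_iff.mp ht0]
  have hφi : IntervalIntegrable φ volume a b := hφc.intervalIntegrable_of_Icc hab
  have hftc : ∫ t in a..b, φ t = g b - g a :=
    integral_eq_of_hasDerivAt_off_countable_of_le g φ hab hzeros.countable hg
      (fun t ⟨ht, hnz⟩ => hgφ t ht fun h0 => hnz ⟨Ioo_subset_Icc_self ht, h0⟩) hφi
  have hlinc : Continuous fun t : ℝ => φ a + K * (t - a) := by fun_prop
  have hlin : ∫ t in a..b, (φ a + K * (t - a)) = φ a * (b - a) + K / 2 * (b - a) ^ 2 := by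
    have hint : IntervalIntegrable (fun t : ℝ => K * (t - a)) volume a b :=
      (continuous_const.mul (continuous_sub_right a)).intervalIntegrable a b
    rw [intervalIntegral.integral_add intervalIntegrable_const hint,
      intervalIntegral.integral_const_mul, intervalIntegral.integral_comp_sub_right (fun t => t)]
    simp only [intervalIntegral.integral_const, integral_id, smul_eq_mul, sub_self]
    ring
  rw [← hftc, ← hlin]
  refine intervalIntegral.integral_mono_on hab (hlinc.intervalIntegrable a b) hφi fun t ht => ?_
  linarith [hgrowth a (left_mem_Icc.mpr hab) t ht ht.1]

section

variable {E : Type*} [NormedAddCommGroup E] [NormedSpace ℝ E]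

theorem add_fderiv_add_le_of_le_fderiv_fderiv {f : E → ℝ} {x y : E} {K : ℝ} (hK : 0 < K)
    (hf : ContinuousOn f (segment ℝ x y))
    (hHess : ∀ z ∈ segment ℝ x y, K ≤ fderiv ℝ (fderiv ℝ f) z (y - x) (y - x)) :
    f x + fderiv ℝ f x (y - x) + K / 2 ≤ f y := by
  set ℓ := AffineMap.lineMap (k := ℝ) x y
  have hℓ : ∀ t ∈ Icc (0 : ℝ) 1, ℓ t ∈ segment ℝ x y := fun t ht =>
    segment_eq_image_lineMap ℝ x y ▸ mem_image_of_mem ℓ ht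
  have hG : ∀ t ∈ Icc (0 : ℝ) 1, DifferentiableAt ℝ (fderiv ℝ f) (ℓ t) := fun t ht =>
    differentiableAt_of_fderiv_ne_zero fun h0 => by
      simpa [h0] using (hK.trans_le (hHess _ (hℓ t ht))).ne'
  have key := mul_sub_add_sq_le_sub_of_hasDerivAt_of_ne_zero (g := f ∘ ℓ)
    (φ := fun t => fderiv ℝ f (ℓ t) (y - x))
    (φ' := fun t => fderiv ℝ (fderiv ℝ f) (ℓ t) (y - x) (y - x)) zero_le_one hK
    (hf.comp AffineMap.lineMap_continuous.continuousOn hℓ)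
    (fun t ht => ((hG t ht).hasFDerivAt.comp_hasDerivAt t AffineMap.hasDerivAt_lineMap).clm_apply
      (hasDerivAt_const t (y - x)) |>.congr_deriv (by simp))
    (fun t ht => hHess _ (hℓ t ht))
    (fun t _ hne => (differentiableAt_of_fderiv_ne_zero fun h0 => hne (by simp [h0])).hasFDerivAt
      |>.comp_hasDerivAt t AffineMap.hasDerivAt_lineMap)
  simp only [Function.comp, ℓ, AffineMap.lineMap_apply_zero, AffineMap.lineMap_apply_one] at key
  linarith

theorem IsLocalMinOn.fderiv_nonneg {f : E → ℝ} {s : Set E} {a y : E} (h : IsLocalMinOn f s a)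
    (hy : y ∈ posTangentConeAt s a) : 0 ≤ fderiv ℝ f a y := by
  by_cases hf : DifferentiableAt ℝ f a
  · exact h.hasFDerivWithinAt_nonneg hf.hasFDerivAt.hasFDerivWithinAt hy
  · simp [fderiv_zero_of_not_differentiableAt hf]

theorem sub_mem_posTangentConeAt_prod_of_convex_of_isOpen {F : Type*} [NormedAddCommGroup F]
    [NormedSpace ℝ F] {s : Set E} {t : Set F} (hs : Convex ℝ s) (ht : IsOpen t)
    {x y : E × F} (hx : x ∈ s ×ˢ t) (hy : y ∈ s ×ˢ t) : y - x ∈ posTangentConeAt (s ×ˢ t) x := by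
  refine mem_posTangentConeAt_of_frequently_mem (Eventually.frequently ?_)
  have hsnd : ∀ᶠ r in 𝓝 (0 : ℝ), x.2 + r • (y.2 - x.2) ∈ t :=
    (continuous_const.add (continuous_id.smul continuous_const)).tendsto' 0 x.2 (by simp)
      |>.eventually (ht.mem_nhds hx.2)
  filter_upwards [Ioc_mem_nhdsGT one_pos, nhdsWithin_le_nhds hsnd] with r hr hr'
  exact ⟨hs.add_smul_sub_mem hx.1 hy.1 (Ioc_subset_Icc_self hr), hr'⟩

end

theorem contamination_penalty_mem_Icc {γ c₀ c e : ℝ} (hγ : 0 ≤ γ) (hc₀ : c₀ ∈ Icc (0 : ℝ) 1)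
    (hc : c ∈ Icc (0 : ℝ) 1) (he : 0 ≤ e) :
    (1 + γ) * (1 - c₀) * c ^ γ * e ∈ Icc 0 ((1 + γ) * e) := by
  have hcγ : c ^ γ ∈ Icc (0 : ℝ) 1 := ⟨Real.rpow_nonneg hc.1 γ, Real.rpow_le_one hc.1 hc.2 hγ⟩
  have hweight : (1 - c₀) * c ^ γ ∈ Icc (0 : ℝ) 1 :=
    ⟨mul_nonneg (by linarith [hc₀.2]) hcγ.1, mul_le_one₀ (by linarith [hc₀.1]) hcγ.1 hcγ.2⟩
  have hγe : 0 ≤ (1 + γ) * e := mul_nonneg (by linarith) he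
  constructor <;> nlinarith [hweight.1, hweight.2]

theorem enlarged_model_bias_bound_general
    {k d : ℕ} (γ : ℝ) (hγ : 0 < γ)
    (Θ : Set (Fin d → ℝ)) (hΘ : IsOpen Θ)
    (p : (Fin d → ℝ) → (Fin k → ℝ) → ℝ)
    (hp0 : ∀ θ x, 0 ≤ p θ x)
    (θ₀ : Fin d → ℝ) (hθ₀ : θ₀ ∈ Θ)
    (w : (Fin k → ℝ) → ℝ) (hw0 : ∀ x, 0 ≤ w x)
    (c₀ : ℝ) (hc₀ : c₀ ∈ Set.Ioc (0 : ℝ) 1)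
    (ε : (Fin d → ℝ) → ℝ) (hε : ∀ θ, ε θ = ∫ x, w x * p θ x ^ γ)
    (f₀ f₁ : ℝ × (Fin d → ℝ) → ℝ)
    (hf₁ : ∀ c θ, f₁ (c, θ) = f₀ (c, θ) - (1 + γ) * (1 - c₀) * c ^ γ * ε θ)
    (c₁ : ℝ) (θ₁ : Fin d → ℝ) (hc₁ : c₁ ∈ Set.Ioc (0 : ℝ) 1) (hθ₁ : θ₁ ∈ Θ)
    (hmin1 : ∀ ξ ∈ (Set.Ioc (0 : ℝ) 1) ×ˢ Θ, f₁ (c₁, θ₁) ≤ f₁ ξ)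
    (hmin0 : ∀ ξ ∈ (Set.Ioc (0 : ℝ) 1) ×ˢ Θ, f₀ (c₀, θ₀) ≤ f₀ ξ)
    (N : Set (ℝ × (Fin d → ℝ))) (hNconv : Convex ℝ N)
    (hNsub : {ξ ∈ (Set.Ioc (0 : ℝ) 1) ×ˢ Θ | f₁ ξ ≤ f₁ (c₁, θ₁) + (1 + γ) * ε θ₁} ⊆ N)
    (hdiff : ContDiffOn ℝ 2 f₀ N)
    (δ : ℝ) (hδ : 0 < δ)
    (hHess : ∀ ξ ∈ N, ∀ v : ℝ × (Fin d → ℝ),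
      δ * ‖v‖ ^ 2 ≤ fderiv ℝ (fderiv ℝ f₀) ξ v v) :
    (c₀, θ₀) ∈ N ∧ (c₁, θ₁) ∈ N ∧
      ‖(c₁, θ₁) - (c₀, θ₀)‖ ≤ Real.sqrt (2 * (1 + γ) * ε θ₁ / δ) := by
  have hε_nonneg : ∀ θ, 0 ≤ ε θ := fun θ => (hε θ).symm ▸
    integral_nonneg fun x => mul_nonneg (hw0 x) (Real.rpow_nonneg (hp0 θ x) γ)
  have hξ₀ : ((c₀, θ₀) : ℝ × (Fin d → ℝ)) ∈ Ioc (0 : ℝ) 1 ×ˢ Θ := ⟨hc₀, hθ₀⟩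
  have hξ₁ : ((c₁, θ₁) : ℝ × (Fin d → ℝ)) ∈ Ioc (0 : ℝ) 1 ×ˢ Θ := ⟨hc₁, hθ₁⟩
  have hpen₀ := contamination_penalty_mem_Icc hγ.le (Ioc_subset_Icc_self hc₀)
    (Ioc_subset_Icc_self hc₀) (hε_nonneg θ₀)
  have hpen₁ := contamination_penalty_mem_Icc hγ.le (Ioc_subset_Icc_self hc₀)
    (Ioc_subset_Icc_self hc₁) (hε_nonneg θ₁)
  have hgap : f₀ (c₁, θ₁) ≤ f₀ (c₀, θ₀) + (1 + γ) * ε θ₁ := by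
    linarith [hf₁ c₀ θ₀, hf₁ c₁ θ₁, hmin1 _ hξ₀, hpen₀.1, hpen₁.2]
  have hN₀ : ((c₀, θ₀) : ℝ × (Fin d → ℝ)) ∈ N :=
    hNsub ⟨hξ₀, by linarith [hf₁ c₀ θ₀, hf₁ c₁ θ₁, hmin0 _ hξ₁, hpen₀.1, hpen₁.2]⟩
  have hN₁ : ((c₁, θ₁) : ℝ × (Fin d → ℝ)) ∈ N :=
    hNsub ⟨hξ₁, by linarith [mul_nonneg (by linarith : (0 : ℝ) ≤ 1 + γ) (hε_nonneg θ₁)]⟩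
  refine ⟨hN₀, hN₁, ?_⟩
  rcases eq_or_ne ((c₁, θ₁) - (c₀, θ₀) : ℝ × (Fin d → ℝ)) 0 with hv | hv
  · simp [hv]
  have hstrong := add_fderiv_add_le_of_le_fderiv_fderiv
    (mul_pos hδ (pow_pos (norm_pos_iff.mpr hv) 2))
    (hdiff.continuousOn.mono (hNconv.segment_subset hN₀ hN₁))
    fun z hz => hHess z (hNconv.segment_subset hN₀ hN₁ hz) _
  have hfirst := (IsMinOn.localize (f := f₀) hmin0).fderiv_nonneg
    (sub_mem_posTangentConeAt_prod_of_convex_of_isOpen (convex_Ioc 0 1) hΘ hξ₀ hξ₁)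
  refine Real.le_sqrt_of_sq_le ((le_div_iff₀ hδ).mpr ?_)
  linarith

/-- (Theorem 2, quantitative form) Let `f₀(ξ) = S_power(c₀p₀, c·p_θ)` and
`f₁(ξ) = S_power(p, c·p_θ) = f₀(ξ) − (1+γ)(1−c₀)c^γ ε_θ` with `ε_θ = ∫ w p_θ^γ`, let
`ξ₁ = (c₁,θ₁)` minimize `f₁` over `(0,1]×Θ` and `ξ₀ = (c₀,θ₀)` minimize `f₀`. If `N` is a
convex set containing the sublevel set `{ξ : f₁(ξ) ≤ f₁(ξ₁) + (1+γ)ε₁}`, `f₀` is twice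
differentiable on `N` and the Hessian of `f₀` has all eigenvalues greater than `δ > 0`
on `N`, then `ξ₀, ξ₁ ∈ N` and `‖ξ₁ − ξ₀‖ ≤ √(2(1+γ)ε₁/δ)`. -/
theorem enlarged_model_bias_bound
    {k d : ℕ} (γ : ℝ) (hγ : 0 < γ)
    (Θ : Set (Fin d → ℝ)) (hΘ : IsOpen Θ)
    (p : (Fin d → ℝ) → (Fin k → ℝ) → ℝ)
    (hpm : ∀ θ, Measurable (p θ)) (hp0 : ∀ θ x, 0 ≤ p θ x)
    (hpi : ∀ θ ∈ Θ, Integrable (p θ)) (hp1 : ∀ θ ∈ Θ, (∫ x, p θ x) = 1)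
    (θ₀ : Fin d → ℝ) (hθ₀ : θ₀ ∈ Θ)
    (w : (Fin k → ℝ) → ℝ) (hwm : Measurable w) (hw0 : ∀ x, 0 ≤ w x)
    (hwi : Integrable w) (hw1 : (∫ x, w x) = 1)
    (c₀ : ℝ) (hc₀ : c₀ ∈ Set.Ioc (0 : ℝ) 1)
    (hpint : ∀ θ ∈ Θ, Integrable (fun x => p θ x ^ (1 + γ)))
    (hp₀pint : ∀ θ ∈ Θ, Integrable (fun x => p θ₀ x * p θ x ^ γ))
    (hwpint : ∀ θ ∈ Θ, Integrable (fun x => w x * p θ x ^ γ))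
    (ε : (Fin d → ℝ) → ℝ) (hε : ∀ θ, ε θ = ∫ x, w x * p θ x ^ γ)
    (f₀ f₁ : ℝ × (Fin d → ℝ) → ℝ)
    (hf₀ : ∀ c θ, f₀ (c, θ) =
      γ * (∫ x, (c * p θ x) ^ (1 + γ)) -
        (1 + γ) * (∫ x, (c₀ * p θ₀ x) * (c * p θ x) ^ γ))
    (hf₁ : ∀ c θ, f₁ (c, θ) = f₀ (c, θ) - (1 + γ) * (1 - c₀) * c ^ γ * ε θ)
    (c₁ : ℝ) (θ₁ : Fin d → ℝ) (hc₁ : c₁ ∈ Set.Ioc (0 : ℝ) 1) (hθ₁ : θ₁ ∈ Θ)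
    (hmin1 : ∀ ξ ∈ (Set.Ioc (0 : ℝ) 1) ×ˢ Θ, f₁ (c₁, θ₁) ≤ f₁ ξ)
    (hmin0 : ∀ ξ ∈ (Set.Ioc (0 : ℝ) 1) ×ˢ Θ, f₀ (c₀, θ₀) ≤ f₀ ξ)
    (N : Set (ℝ × (Fin d → ℝ))) (hNconv : Convex ℝ N)
    (hNsub : {ξ ∈ (Set.Ioc (0 : ℝ) 1) ×ˢ Θ | f₁ ξ ≤ f₁ (c₁, θ₁) + (1 + γ) * ε θ₁} ⊆ N)
    (hdiff : ContDiffOn ℝ 2 f₀ N)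
    (δ : ℝ) (hδ : 0 < δ)
    (hHess : ∀ ξ ∈ N, ∀ v : ℝ × (Fin d → ℝ),
      δ * ‖v‖ ^ 2 ≤ fderiv ℝ (fderiv ℝ f₀) ξ v v) :
    (c₀, θ₀) ∈ N ∧ (c₁, θ₁) ∈ N ∧
      ‖(c₁, θ₁) - (c₀, θ₀)‖ ≤ Real.sqrt (2 * (1 + γ) * ε θ₁ / δ) :=
  enlarged_model_bias_bound_general γ hγ Θ hΘ p hp0 θ₀ hθ₀ w hw0 c₀ hc₀ ε hε f₀ f₁ hf₁ c₁ θ₁ hc₁ hθ₁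
    hmin1 hmin0 N hNconv hNsub hdiff δ hδ hHess
end

section
/- Let γ > 0 and let φ : [0,∞) → ℝ satisfy φ(1) = −1 and φ(z) ≥ −z^{1+γ}, and additionally suppose φ is Lipschitz continuous on [0,∞) with Lipschitz constant L. Let p₀, w be probability densities on ℝ^k, c₀ ∈ (0,1], p = c₀p₀ + (1−c₀)w, let p_θ be a probability density with ∫p_θ^{1+γ} ∈ (0,∞), ∫p₀p_θ^γ < ∞, ε_θ := ∫w p_θ^γ < ∞, and let c > 0. Then |S_φ(p, c·p_θ) − S_φ(c₀p₀, c·p_θ)| ≤ L·(1−c₀)·c^γ·ε_θ. -/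
open MeasureTheory

/-- If `φ` is Lipschitz with constant `L` on `[0,∞)`, then under contamination
`p = c₀p₀ + (1−c₀)w` the Hölder scores of the enlarged model satisfy
`|S_φ(p, c·p_θ) − S_φ(c₀p₀, c·p_θ)| ≤ L(1−c₀)c^γ ε_θ` with `ε_θ = ∫ w p_θ^γ`. -/
theorem holder_score_lipschitz_contamination_bound
    {k : ℕ} (γ : ℝ) (hγ : 0 < γ)
    (φ : ℝ → ℝ) (hφ1 : φ 1 = -1)
    (hφ : ∀ z : ℝ, 0 ≤ z → -(z ^ (1 + γ)) ≤ φ z)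
    (L : ℝ) (hL : 0 ≤ L)
    (hLip : ∀ z₁ z₂ : ℝ, 0 ≤ z₁ → 0 ≤ z₂ → |φ z₁ - φ z₂| ≤ L * |z₁ - z₂|)
    (p₀ w pθ : (Fin k → ℝ) → ℝ)
    (hp₀m : Measurable p₀) (hwm : Measurable w) (hpθm : Measurable pθ)
    (hp₀0 : ∀ x, 0 ≤ p₀ x) (hw0 : ∀ x, 0 ≤ w x) (hpθ0 : ∀ x, 0 ≤ pθ x)
    (hp₀i : Integrable p₀) (hwi : Integrable w) (hpθi : Integrable pθ)
    (hp₀1 : (∫ x, p₀ x) = 1) (hw1 : (∫ x, w x) = 1) (hpθ1 : (∫ x, pθ x) = 1)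
    (hpθint : Integrable (fun x => pθ x ^ (1 + γ)))
    (hpθpos : 0 < ∫ x, pθ x ^ (1 + γ))
    (hp₀pθint : Integrable (fun x => p₀ x * pθ x ^ γ))
    (hεint : Integrable (fun x => w x * pθ x ^ γ))
    (c₀ : ℝ) (hc₀ : c₀ ∈ Set.Ioc (0 : ℝ) 1)
    (c : ℝ) (hc : 0 < c) :
    |φ ((∫ x, (c₀ * p₀ x + (1 - c₀) * w x) * (c * pθ x) ^ γ) /
          (∫ x, (c * pθ x) ^ (1 + γ))) * (∫ x, (c * pθ x) ^ (1 + γ)) -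
        φ ((∫ x, (c₀ * p₀ x) * (c * pθ x) ^ γ) /
          (∫ x, (c * pθ x) ^ (1 + γ))) * (∫ x, (c * pθ x) ^ (1 + γ))| ≤
      L * (1 - c₀) * c ^ γ * (∫ x, w x * pθ x ^ γ) := by
  obtain ⟨hc₀0, hc₀1⟩ := hc₀
  have hcγ : (0:ℝ) < c ^ γ := Real.rpow_pos_of_pos hc γ
  have hrw : ∀ x, (c * pθ x) ^ γ = c ^ γ * pθ x ^ γ := fun x =>
    Real.mul_rpow hc.le (hpθ0 x)
  have hrw1 : ∀ x, (c * pθ x) ^ (1+γ) = c ^ (1+γ) * pθ x ^ (1+γ) := fun x =>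
    Real.mul_rpow hc.le (hpθ0 x)
  have hIpos : 0 < ∫ x, (c * pθ x) ^ (1+γ) := by
    have : (∫ x, (c * pθ x) ^ (1+γ)) = c ^ (1+γ) * ∫ x, pθ x ^ (1+γ) := by
      simp_rw [hrw1]; rw [integral_const_mul]
    rw [this]; exact mul_pos (Real.rpow_pos_of_pos hc _) hpθpos
  set I := ∫ x, (c * pθ x) ^ (1+γ) with hI
  set E := ∫ x, w x * pθ x ^ γ with hE
  have hE0 : 0 ≤ E := integral_nonneg fun x =>
    mul_nonneg (hw0 x) (Real.rpow_nonneg (hpθ0 x) γ)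
  have hnum1 : (∫ x, (c₀ * p₀ x + (1 - c₀) * w x) * (c * pθ x) ^ γ)
      = c₀ * c ^ γ * (∫ x, p₀ x * pθ x ^ γ) + (1 - c₀) * c ^ γ * E := by
    have h1 : Integrable (fun x => c₀ * c ^ γ * (p₀ x * pθ x ^ γ)) := hp₀pθint.const_mul _
    have h2 : Integrable (fun x => (1-c₀) * c ^ γ * (w x * pθ x ^ γ)) := hεint.const_mul _
    have heq : (fun x => (c₀ * p₀ x + (1 - c₀) * w x) * (c * pθ x) ^ γ)
        = fun x => c₀ * c ^ γ * (p₀ x * pθ x ^ γ) + (1-c₀) * c ^ γ * (w x * pθ x ^ γ) := by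
      funext x; rw [hrw x]; ring
    rw [heq, integral_add h1 h2, integral_const_mul, integral_const_mul]
  have hnum2 : (∫ x, (c₀ * p₀ x) * (c * pθ x) ^ γ)
      = c₀ * c ^ γ * (∫ x, p₀ x * pθ x ^ γ) := by
    have heq : (fun x => (c₀ * p₀ x) * (c * pθ x) ^ γ)
        = fun x => c₀ * c ^ γ * (p₀ x * pθ x ^ γ) := by
      funext x; rw [hrw x]; ring
    rw [heq, integral_const_mul]
  have hA0 : 0 ≤ ∫ x, p₀ x * pθ x ^ γ := integral_nonneg fun x =>
    mul_nonneg (hp₀0 x) (Real.rpow_nonneg (hpθ0 x) γ)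
  set z₁ := (∫ x, (c₀ * p₀ x + (1 - c₀) * w x) * (c * pθ x) ^ γ) / I with hz₁
  set z₂ := (∫ x, (c₀ * p₀ x) * (c * pθ x) ^ γ) / I with hz₂
  have hz₁0 : 0 ≤ z₁ := by
    rw [hz₁, hnum1]
    exact div_nonneg (add_nonneg (mul_nonneg (mul_nonneg hc₀0.le hcγ.le) hA0)
      (mul_nonneg (mul_nonneg (by linarith) hcγ.le) hE0)) hIpos.le
  have hz₂0 : 0 ≤ z₂ := by
    rw [hz₂, hnum2]
    exact div_nonneg (mul_nonneg (mul_nonneg hc₀0.le hcγ.le) hA0) hIpos.le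
  have hdiff : z₁ - z₂ = (1 - c₀) * c ^ γ * E / I := by
    rw [hz₁, hz₂, hnum1, hnum2, div_sub_div_same]
    ring_nf
  calc |φ z₁ * I - φ z₂ * I| = |φ z₁ - φ z₂| * I := by
        rw [← sub_mul, abs_mul, abs_of_pos hIpos]
    _ ≤ (L * |z₁ - z₂|) * I :=
        mul_le_mul_of_nonneg_right (hLip z₁ z₂ hz₁0 hz₂0) hIpos.le
    _ = L * (1 - c₀) * c ^ γ * E := by
        rw [hdiff, abs_of_nonneg (div_nonneg (mul_nonneg
          (mul_nonneg (by linarith) hcγ.le) hE0) hIpos.le)]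
        field_simp
end

section
/- Let γ > 0, let q be a probability density on ℝ^m, and let f(y|x) and g(y|x) be measurable functions of (x,y) ∈ ℝ^m × ℝ that are nonnegative, such that for q-almost every x, f(·|x) and g(·|x) satisfy the integrability conditions of the density-power score and all conditional scores are q-integrable. Then the conditional density-power score satisfies S_power(f,g;q) ≥ S_power(f,f;q), and equality S_power(f,g;q) = S_power(f,f;q) holds if and only if f(y|x) = g(y|x) almost everywhere with respect to the measure q(x)dx dy. -/
/-!
Pointwise, weighted AM–GM with weights `1/(1+γ)` and `γ/(1+γ)` applied to `a ^ (1 + γ)` and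
`b ^ (1 + γ)` gives `(1 + γ) a b ^ γ ≤ a ^ (1 + γ) + γ b ^ (1 + γ)`, with equality exactly when
`a = b`. The score gap `S_power(f,g;q) - S_power(f,f;q)` is the integral of `q` times this
nonnegative defect, so it is nonnegative, and it vanishes iff the defect vanishes almost
everywhere for `q(x) dx dy`, i.e. iff `f = g` almost everywhere for that measure.
-/

open MeasureTheory Filter

open Real

/-- The Bregman divergence of `t ↦ t ^ (1 + γ)`. -/
noncomputable def powerDivergenceIntegrand (γ a b : ℝ) : ℝ :=
  a ^ (1 + γ) + γ * b ^ (1 + γ) - (1 + γ) * (a * b ^ γ)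

section Pointwise

variable {γ a b : ℝ}

lemma powerDivergenceIntegrand_eq_mul_arith_mean_sub_geom_mean (hγ : 0 < γ) (ha : 0 ≤ a)
    (hb : 0 ≤ b) :
    powerDivergenceIntegrand γ a b =
      (1 + γ) * ((1 + γ)⁻¹ * a ^ (1 + γ) + (γ / (1 + γ)) * b ^ (1 + γ) -
        (a ^ (1 + γ)) ^ (1 + γ)⁻¹ * (b ^ (1 + γ)) ^ (γ / (1 + γ))) := by
  have hγ' : 1 + γ ≠ 0 := by positivity
  rw [← rpow_mul ha, ← rpow_mul hb, mul_inv_cancel₀ hγ', rpow_one,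
    mul_div_cancel₀ _ hγ', powerDivergenceIntegrand]
  field_simp

lemma powerDivergenceIntegrand_nonneg (hγ : 0 < γ) (ha : 0 ≤ a) (hb : 0 ≤ b) :
    0 ≤ powerDivergenceIntegrand γ a b := by
  have hgm := geom_mean_le_arith_mean2_weighted (by positivity) (by positivity)
    (rpow_nonneg ha (1 + γ)) (rpow_nonneg hb (1 + γ)) (by field_simp : (1 + γ)⁻¹ + γ / (1 + γ) = 1)
  rw [powerDivergenceIntegrand_eq_mul_arith_mean_sub_geom_mean hγ ha hb]
  exact mul_nonneg (by positivity) (sub_nonneg.2 hgm)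

lemma powerDivergenceIntegrand_eq_zero_iff (hγ : 0 < γ) (ha : 0 ≤ a) (hb : 0 ≤ b) :
    powerDivergenceIntegrand γ a b = 0 ↔ a = b := by
  have hγ' : 1 + γ ≠ 0 := by positivity
  rw [powerDivergenceIntegrand_eq_mul_arith_mean_sub_geom_mean hγ ha hb, mul_eq_zero,
    or_iff_right hγ', sub_eq_zero, eq_comm, geom_mean_eq_arith_mean2_weighted_iff_of_pos
    (by positivity) (by positivity) (rpow_nonneg ha _) (rpow_nonneg hb _) (by field_simp),
    rpow_left_inj ha hb hγ']

lemma mul_powerDivergenceIntegrand (w : ℝ) :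
    w * powerDivergenceIntegrand γ a b =
      w * a ^ (1 + γ) + γ * (w * b ^ (1 + γ)) - (1 + γ) * (a * w * b ^ γ) := by
  rw [powerDivergenceIntegrand]
  ring

end Pointwise

section Integral

variable {α : Type*} [MeasurableSpace α] {μ : Measure α} {γ : ℝ} {w d u v : α → ℝ}

lemma integral_mul_eq_zero_iff_ae_withDensity (hw : Measurable w) (hw0 : 0 ≤ w) (hd0 : 0 ≤ d)
    (hint : Integrable (fun z => w z * d z) μ) :
    ∫ z, w z * d z ∂μ = 0 ↔ d =ᵐ[μ.withDensity fun z => ENNReal.ofReal (w z)] 0 := by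
  rw [integral_eq_zero_iff_of_nonneg (fun z => mul_nonneg (hw0 z) (hd0 z)) hint,
    EventuallyEq, EventuallyEq, ae_withDensity_iff hw.ennreal_ofReal]
  refine eventually_congr (Eventually.of_forall fun z => ?_)
  simp only [Pi.zero_apply, mul_eq_zero, ne_eq, ENNReal.ofReal_eq_zero, not_le]
  rw [(show 0 ≤ w z from hw0 z).lt_iff_ne']
  tauto

lemma integrable_mul_powerDivergenceIntegrand
    (hu : Integrable (fun z => w z * u z ^ (1 + γ)) μ)
    (hv : Integrable (fun z => w z * v z ^ (1 + γ)) μ)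
    (huv : Integrable (fun z => u z * w z * v z ^ γ) μ) :
    Integrable (fun z => w z * powerDivergenceIntegrand γ (u z) (v z)) μ := by
  simp_rw [mul_powerDivergenceIntegrand]
  exact (hu.add (hv.const_mul γ)).sub (huv.const_mul (1 + γ))

lemma integral_mul_powerDivergenceIntegrand
    (hu : Integrable (fun z => w z * u z ^ (1 + γ)) μ)
    (hv : Integrable (fun z => w z * v z ^ (1 + γ)) μ)
    (huv : Integrable (fun z => u z * w z * v z ^ γ) μ) :
    ∫ z, w z * powerDivergenceIntegrand γ (u z) (v z) ∂μ =
      (∫ z, w z * u z ^ (1 + γ) ∂μ) + γ * (∫ z, w z * v z ^ (1 + γ) ∂μ) -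
        (1 + γ) * ∫ z, u z * w z * v z ^ γ ∂μ := by
  simp_rw [mul_powerDivergenceIntegrand]
  rw [integral_sub, integral_add hu (hv.const_mul γ), integral_const_mul, integral_const_mul]
  exacts [hu.add (hv.const_mul γ), huv.const_mul (1 + γ)]

end Integral

theorem conditional_density_power_score_strictly_proper_general
    {m : ℕ} (γ : ℝ) (hγ : 0 < γ)
    (q : (Fin m → ℝ) → ℝ)
    (hqm : Measurable q) (hq0 : ∀ x, 0 ≤ q x)
    (f g : ((Fin m → ℝ) × ℝ) → ℝ)
    (hf0 : ∀ z, 0 ≤ f z) (hg0 : ∀ z, 0 ≤ g z)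
    (hgint : Integrable (fun z => q z.1 * g z ^ (1 + γ)))
    (hfgint : Integrable (fun z => f z * q z.1 * g z ^ γ))
    (hfint : Integrable (fun z => q z.1 * f z ^ (1 + γ))) :
    (-(∫ z, q z.1 * f z ^ (1 + γ)) ≤
        γ * (∫ z, q z.1 * g z ^ (1 + γ)) - (1 + γ) * (∫ z, f z * q z.1 * g z ^ γ)) ∧
    (γ * (∫ z, q z.1 * g z ^ (1 + γ)) - (1 + γ) * (∫ z, f z * q z.1 * g z ^ γ) =
        -(∫ z, q z.1 * f z ^ (1 + γ)) ↔
      f =ᵐ[(volume : Measure ((Fin m → ℝ) × ℝ)).withDensity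
            (fun z => ENNReal.ofReal (q z.1))] g) := by
  have hgap := integral_mul_powerDivergenceIntegrand hfint hgint hfgint
  have hgap_nonneg : 0 ≤ ∫ z, q z.1 * powerDivergenceIntegrand γ (f z) (g z) :=
    integral_nonneg fun z =>
      mul_nonneg (hq0 _) (powerDivergenceIntegrand_nonneg hγ (hf0 z) (hg0 z))
  have hgap_zero := integral_mul_eq_zero_iff_ae_withDensity (w := fun z => q z.1)
    (by fun_prop) (fun z => hq0 z.1) (fun z => powerDivergenceIntegrand_nonneg hγ (hf0 z) (hg0 z))
    (integrable_mul_powerDivergenceIntegrand hfint hgint hfgint)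
  refine ⟨by linarith, Iff.trans ?_ (hgap_zero.trans ?_)⟩
  · rw [hgap]
    constructor <;> intro <;> linarith
  · exact eventually_congr (Eventually.of_forall fun z =>
      powerDivergenceIntegrand_eq_zero_iff hγ (hf0 z) (hg0 z))

/-- The conditional density-power score
`S_power(f,g;q) = γ⟨q g^{1+γ}⟩ − (1+γ)⟨f q g^γ⟩` satisfies
`S_power(f,g;q) ≥ S_power(f,f;q) = −⟨q f^{1+γ}⟩`, with equality iff `f = g` almost
everywhere with respect to the measure `q(x)dx dy`. -/
theorem conditional_density_power_score_strictly_proper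
    {m : ℕ} (γ : ℝ) (hγ : 0 < γ)
    (q : (Fin m → ℝ) → ℝ)
    (hqm : Measurable q) (hq0 : ∀ x, 0 ≤ q x)
    (hqi : Integrable q) (hq1 : (∫ x, q x) = 1)
    (f g : ((Fin m → ℝ) × ℝ) → ℝ)
    (hfm : Measurable f) (hgm : Measurable g)
    (hf0 : ∀ z, 0 ≤ f z) (hg0 : ∀ z, 0 ≤ g z)
    (hgint : Integrable (fun z => q z.1 * g z ^ (1 + γ)))
    (hfgint : Integrable (fun z => f z * q z.1 * g z ^ γ))
    (hfint : Integrable (fun z => q z.1 * f z ^ (1 + γ))) :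
    (-(∫ z, q z.1 * f z ^ (1 + γ)) ≤
        γ * (∫ z, q z.1 * g z ^ (1 + γ)) - (1 + γ) * (∫ z, f z * q z.1 * g z ^ γ)) ∧
    (γ * (∫ z, q z.1 * g z ^ (1 + γ)) - (1 + γ) * (∫ z, f z * q z.1 * g z ^ γ) =
        -(∫ z, q z.1 * f z ^ (1 + γ)) ↔
      f =ᵐ[(volume : Measure ((Fin m → ℝ) × ℝ)).withDensity
            (fun z => ENNReal.ofReal (q z.1))] g) :=
  conditional_density_power_score_strictly_proper_general γ hγ q hqm hq0 f g hf0 hg0 hgint hfgint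
    hfint
end

section
/- Let γ > 0, let q be a probability density on ℝ^m, and let f(y|x) ≥ 0 and g(y|x) ≥ 0 be measurable with ⟨q g^{1+γ}⟩ ∈ (0,∞) and ⟨f q g^γ⟩ ∈ (0,∞), where ⟨h⟩ = ∬h(x,y)dx dy. Then for every c > 0, the conditional density-power score satisfies S_power(f, c·g; q) ≥ −⟨f q g^γ⟩^{1+γ}/⟨q g^{1+γ}⟩^γ = −(−S_sphere(f,g;q))^{1+γ}, and equality holds when c = ⟨f q g^γ⟩/⟨q g^{1+γ}⟩. -/
open MeasureTheory Real

/-!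
With `A = ⟨f q g^γ⟩` and `B = ⟨q g^{1+γ}⟩`, the score of `c·g` is
`γ c^{1+γ} B − (1+γ) c^γ A`. Young's inequality with the conjugate exponents `(1+γ)/γ` and
`1+γ`, applied to `x = c^γ B^{γ/(1+γ)}` and `y = A B^{-γ/(1+γ)}`, bounds `(1+γ) c^γ A` by
`γ c^{1+γ} B + A^{1+γ}/B^γ`; the bound is attained at `c = A/B`.
-/

/-- `S_power(f, c·g; q)` in terms of `A = ⟨f q g^γ⟩` and `B = ⟨q g^{1+γ}⟩`. -/
noncomputable def scaledPowerScore (γ A B c : ℝ) : ℝ :=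
  γ * c ^ (1 + γ) * B - (1 + γ) * c ^ γ * A

lemma holderConjugate_one_add_div_self {γ : ℝ} (hγ : 0 < γ) :
    ((1 + γ) / γ).HolderConjugate (1 + γ) := by
  rw [Real.holderConjugate_iff]
  constructor
  · rw [lt_div_iff₀ hγ]; linarith
  · field_simp; ring

lemma one_add_mul_rpow_mul_le {γ A B c : ℝ} (hγ : 0 < γ) (hA : 0 ≤ A) (hB : 0 < B)
    (hc : 0 ≤ c) :
    (1 + γ) * (c ^ γ * A) ≤ γ * c ^ (1 + γ) * B + A ^ (1 + γ) / B ^ γ := by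
  have h1γ : 0 < 1 + γ := by linarith
  have young := young_inequality_of_nonneg (by positivity : 0 ≤ c ^ γ * B ^ (γ / (1 + γ)))
    (by positivity : 0 ≤ A * B ^ (-(γ / (1 + γ)))) (holderConjugate_one_add_div_self hγ)
  have hx : (c ^ γ * B ^ (γ / (1 + γ))) ^ ((1 + γ) / γ) = c ^ (1 + γ) * B := by
    rw [mul_rpow (by positivity) (by positivity), ← rpow_mul hc, ← rpow_mul hB.le,
      mul_div_cancel₀ _ hγ.ne',
      show γ / (1 + γ) * ((1 + γ) / γ) = 1 by field_simp, rpow_one]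
  have hy : (A * B ^ (-(γ / (1 + γ)))) ^ (1 + γ) = A ^ (1 + γ) / B ^ γ := by
    rw [mul_rpow hA (by positivity), ← rpow_mul hB.le, neg_mul, div_mul_cancel₀ _ h1γ.ne',
      rpow_neg hB.le, div_eq_mul_inv]
  have hxy : c ^ γ * B ^ (γ / (1 + γ)) * (A * B ^ (-(γ / (1 + γ)))) = c ^ γ * A := by
    rw [mul_mul_mul_comm, ← rpow_add hB, add_neg_cancel, rpow_zero, mul_one]
  rw [hx, hy, hxy] at young
  calc (1 + γ) * (c ^ γ * A)
      ≤ (1 + γ) * (c ^ (1 + γ) * B / ((1 + γ) / γ) + A ^ (1 + γ) / B ^ γ / (1 + γ)) := by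
        gcongr
    _ = γ * c ^ (1 + γ) * B + A ^ (1 + γ) / B ^ γ := by
        field_simp

lemma neg_rpow_div_rpow_le_scaledPowerScore {γ A B c : ℝ} (hγ : 0 < γ) (hA : 0 ≤ A)
    (hB : 0 < B) (hc : 0 ≤ c) :
    -(A ^ (1 + γ)) / B ^ γ ≤ scaledPowerScore γ A B c := by
  have := one_add_mul_rpow_mul_le hγ hA hB hc
  unfold scaledPowerScore
  rw [neg_div]
  linarith

lemma scaledPowerScore_div_eq (γ : ℝ) {A B : ℝ} (hA : 0 < A) (hB : 0 < B) :
    scaledPowerScore γ A B (A / B) = -(A ^ (1 + γ)) / B ^ γ := by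
  have hBγ : 0 < B ^ γ := rpow_pos_of_pos hB γ
  unfold scaledPowerScore
  rw [div_rpow hA.le hB.le, div_rpow hA.le hB.le, rpow_add hA, rpow_add hB, rpow_one, rpow_one]
  field_simp
  ring

lemma div_rpow_div_one_add_rpow {γ A B : ℝ} (hγ : 1 + γ ≠ 0) (hA : 0 ≤ A) (hB : 0 ≤ B) :
    (A / B ^ (γ / (1 + γ))) ^ (1 + γ) = A ^ (1 + γ) / B ^ γ := by
  rw [div_rpow hA (rpow_nonneg hB _), ← rpow_mul hB, div_mul_cancel₀ _ hγ]

theorem conditional_density_power_score_scaled_lower_bound_general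
    {m : ℕ} (γ : ℝ) (hγ : 0 < γ)
    (q : (Fin m → ℝ) → ℝ)
    (f g : ((Fin m → ℝ) × ℝ) → ℝ)
    (hgpos : 0 < ∫ z, q z.1 * g z ^ (1 + γ))
    (hfgpos : 0 < ∫ z, f z * q z.1 * g z ^ γ) :
    (∀ c : ℝ, 0 < c →
      -((∫ z, f z * q z.1 * g z ^ γ) ^ (1 + γ)) / (∫ z, q z.1 * g z ^ (1 + γ)) ^ γ ≤
        γ * c ^ (1 + γ) * (∫ z, q z.1 * g z ^ (1 + γ)) -
          (1 + γ) * c ^ γ * (∫ z, f z * q z.1 * g z ^ γ)) ∧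
    (-((∫ z, f z * q z.1 * g z ^ γ) ^ (1 + γ)) / (∫ z, q z.1 * g z ^ (1 + γ)) ^ γ =
      -((-(-(∫ z, f z * q z.1 * g z ^ γ) /
            (∫ z, q z.1 * g z ^ (1 + γ)) ^ (γ / (1 + γ)))) ^ (1 + γ))) ∧
    (γ * ((∫ z, f z * q z.1 * g z ^ γ) / (∫ z, q z.1 * g z ^ (1 + γ))) ^ (1 + γ) *
          (∫ z, q z.1 * g z ^ (1 + γ)) -
        (1 + γ) * ((∫ z, f z * q z.1 * g z ^ γ) / (∫ z, q z.1 * g z ^ (1 + γ))) ^ γ *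
          (∫ z, f z * q z.1 * g z ^ γ) =
      -((∫ z, f z * q z.1 * g z ^ γ) ^ (1 + γ)) /
        (∫ z, q z.1 * g z ^ (1 + γ)) ^ γ) := by
  refine ⟨fun c hc => neg_rpow_div_rpow_le_scaledPowerScore hγ hfgpos.le hgpos hc.le, ?_,
    scaledPowerScore_div_eq γ hfgpos hgpos⟩
  rw [neg_div (_ ^ γ), neg_div (_ ^ (γ / (1 + γ))), neg_neg,
    div_rpow_div_one_add_rpow (by linarith) hfgpos.le hgpos.le]

/-- For every `c > 0`, the conditional density-power score
`S_power(f, c·g; q) = γc^{1+γ}⟨q g^{1+γ}⟩ − (1+γ)c^γ⟨f q g^γ⟩` satisfies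
`S_power(f, c·g; q) ≥ −⟨f q g^γ⟩^{1+γ}/⟨q g^{1+γ}⟩^γ = −(−S_sphere(f,g;q))^{1+γ}`,
with equality when `c = ⟨f q g^γ⟩/⟨q g^{1+γ}⟩`. -/
theorem conditional_density_power_score_scaled_lower_bound
    {m : ℕ} (γ : ℝ) (hγ : 0 < γ)
    (q : (Fin m → ℝ) → ℝ)
    (hqm : Measurable q) (hq0 : ∀ x, 0 ≤ q x)
    (hqi : Integrable q) (hq1 : (∫ x, q x) = 1)
    (f g : ((Fin m → ℝ) × ℝ) → ℝ)
    (hfm : Measurable f) (hgm : Measurable g)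
    (hf0 : ∀ z, 0 ≤ f z) (hg0 : ∀ z, 0 ≤ g z)
    (hgint : Integrable (fun z => q z.1 * g z ^ (1 + γ)))
    (hgpos : 0 < ∫ z, q z.1 * g z ^ (1 + γ))
    (hfgint : Integrable (fun z => f z * q z.1 * g z ^ γ))
    (hfgpos : 0 < ∫ z, f z * q z.1 * g z ^ γ) :
    (∀ c : ℝ, 0 < c →
      -((∫ z, f z * q z.1 * g z ^ γ) ^ (1 + γ)) / (∫ z, q z.1 * g z ^ (1 + γ)) ^ γ ≤
        γ * c ^ (1 + γ) * (∫ z, q z.1 * g z ^ (1 + γ)) -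
          (1 + γ) * c ^ γ * (∫ z, f z * q z.1 * g z ^ γ)) ∧
    (-((∫ z, f z * q z.1 * g z ^ γ) ^ (1 + γ)) / (∫ z, q z.1 * g z ^ (1 + γ)) ^ γ =
      -((-(-(∫ z, f z * q z.1 * g z ^ γ) /
            (∫ z, q z.1 * g z ^ (1 + γ)) ^ (γ / (1 + γ)))) ^ (1 + γ))) ∧
    (γ * ((∫ z, f z * q z.1 * g z ^ γ) / (∫ z, q z.1 * g z ^ (1 + γ))) ^ (1 + γ) *
          (∫ z, q z.1 * g z ^ (1 + γ)) -
        (1 + γ) * ((∫ z, f z * q z.1 * g z ^ γ) / (∫ z, q z.1 * g z ^ (1 + γ))) ^ γ *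
          (∫ z, f z * q z.1 * g z ^ γ) =
      -((∫ z, f z * q z.1 * g z ^ γ) ^ (1 + γ)) /
        (∫ z, q z.1 * g z ^ (1 + γ)) ^ γ) :=
  conditional_density_power_score_scaled_lower_bound_general γ hγ q f g hgpos hfgpos
end

section
/- (Theorem 4) Let γ > 0, let Θ ⊆ ℝ^d be open, let {p_θ(y|x) : θ ∈ Θ} be a family of conditional probability densities with ∫p_θ(y|x)^{1+γ}dy finite for each x, and let (x₁,y₁),…,(xₙ,yₙ) be training samples. Define the empirical conditional scores S_power(p̃, c·p_θ; q̃) = −((1+γ)c^γ/n)∑_i p_θ(y_i|x_i)^γ + (γc^{1+γ}/n)∑_i ∫p_θ(y|x_i)^{1+γ}dy and c_reg(θ) = ((1/n)∑_i p_θ(y_i|x_i)^γ)/((1/n)∑_i ∫p_θ(y|x_i)^{1+γ}dy). Let (ĉ, θ̂) be an optimal solution of minimizing S_power(p̃, c·p_θ; q̃) over c ∈ (0,1], θ ∈ Θ, and suppose c_reg(θ) is continuous in a neighborhood of θ̂. If 0 < ĉ < 1, then θ̂ is a local optimal solution of minimizing S_sphere(p̃, p_θ; q̃) = −((1/n)∑_i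 p_θ(y_i|x_i)^γ)/((1/n)∑_i ∫p_θ(y|x_i)^{1+γ}dy)^{γ/(1+γ)} over θ ∈ Θ. Otherwise (ĉ = 1), θ̂ is an optimal solution of minimizing S_power(p̃, p_θ; q̃) over θ ∈ Θ. -/
/-!
Write `A, B` for the two empirical averages, so that the enlarged score is
`F(c, θ) = -(1+γ) c^γ A(θ) + γ c^{1+γ} B(θ)`. For fixed `θ` this is minimized over `c > 0` exactly
at the stationary point `c = A(θ)/B(θ) = c_reg(θ)`, with value `-A^{1+γ}/B^γ`, which is
`-(-S_sphere)^{1+γ}`. An interior optimum `ĉ` is therefore `c_reg(θ̂)`; by continuity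
`c_reg(θ) ∈ (0, 1)` near `θ̂`, so `(c_reg(θ), θ)` is feasible and
`-(-S_sphere(θ̂))^{1+γ} ≤ -(-S_sphere(θ))^{1+γ}` there, and `t ↦ -t^{1+γ}` is decreasing.
-/

open MeasureTheory Filter Topology Set

noncomputable def powerScore (γ c a b : ℝ) : ℝ :=
  -(1 + γ) * c ^ γ * a + γ * c ^ (1 + γ) * b

noncomputable def sphereScore (γ a b : ℝ) : ℝ :=
  -a / b ^ (γ / (1 + γ))

theorem hasDerivAt_powerScore (γ a b : ℝ) {c : ℝ} (hc : 0 < c) :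
    HasDerivAt (fun c => powerScore γ c a b) (γ * (1 + γ) * c ^ (γ - 1) * (c * b - a)) c := by
  have hγ : HasDerivAt (fun c : ℝ => c ^ γ) (γ * c ^ (γ - 1)) c :=
    Real.hasDerivAt_rpow_const (Or.inl hc.ne')
  have hγ1 : HasDerivAt (fun c : ℝ => c ^ (1 + γ)) ((1 + γ) * c ^ (1 + γ - 1)) c :=
    Real.hasDerivAt_rpow_const (Or.inl hc.ne')
  refine (((hγ.const_mul (-(1 + γ))).mul_const a).add
    ((hγ1.const_mul γ).mul_const b)).congr_deriv ?_
  rw [show 1 + γ - 1 = (γ - 1) + 1 by ring, Real.rpow_add_one hc.ne']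
  ring

theorem eq_mul_of_isLocalMin_powerScore {γ a b c : ℝ} (hγ : 0 < γ) (hc : 0 < c)
    (hmin : IsLocalMin (fun c => powerScore γ c a b) c) : a = c * b := by
  have hzero := (hasDerivAt_powerScore γ a b hc).deriv ▸ hmin.deriv_eq_zero
  have hfactor : γ * (1 + γ) * c ^ (γ - 1) ≠ 0 := by positivity
  linarith [(mul_eq_zero.mp hzero).resolve_left hfactor]

theorem powerScore_div {γ a b : ℝ} (hγ : 1 + γ ≠ 0) (ha : 0 ≤ a) (hb : 0 < b) :
    powerScore γ (a / b) a b = -(-sphereScore γ a b) ^ (1 + γ) := by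
  have hγ' : γ + 1 ≠ 0 := by rwa [add_comm]
  have hsphere : (-sphereScore γ a b) ^ (1 + γ) = a ^ (1 + γ) / b ^ γ := by
    rw [sphereScore, neg_div, neg_neg, Real.div_rpow ha (by positivity), ← Real.rpow_mul hb.le,
      div_mul_cancel₀ γ hγ]
  rw [hsphere, powerScore, Real.div_rpow ha hb.le, Real.div_rpow ha hb.le,
    Real.rpow_add' hb.le hγ, Real.rpow_add' ha hγ, Real.rpow_one, Real.rpow_one]
  field_simp
  ring

theorem sphereScore_le_of_powerScore_div_le {γ a b a' b' : ℝ} (hγ : 0 < 1 + γ)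
    (ha : 0 ≤ a) (hb : 0 < b) (ha' : 0 ≤ a') (hb' : 0 < b')
    (h : powerScore γ (a / b) a b ≤ powerScore γ (a' / b') a' b') :
    sphereScore γ a b ≤ sphereScore γ a' b' := by
  have hnonneg : ∀ {a b : ℝ}, 0 ≤ a → 0 < b → 0 ≤ -sphereScore γ a b := fun ha hb => by
    rw [sphereScore, neg_div, neg_neg]
    positivity
  rw [powerScore_div hγ.ne' ha hb, powerScore_div hγ.ne' ha' hb', neg_le_neg_iff,
    Real.rpow_le_rpow_iff (hnonneg ha' hb') (hnonneg ha hb) hγ] at h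
  exact neg_le_neg_iff.mp h

theorem isLocalMinOn_sphereScore_of_forall_powerScore_le {X : Type*} [TopologicalSpace X]
    {γ : ℝ} (hγ : 0 < γ) {A B : X → ℝ} {Θ : Set X} (hB : ∀ θ ∈ Θ, 0 < B θ)
    {c₀ : ℝ} {θ₀ : X} (hc₀ : c₀ ∈ Ioo 0 1) (hθ₀ : θ₀ ∈ Θ)
    (hopt : ∀ c ∈ Ioc (0 : ℝ) 1, ∀ θ ∈ Θ,
      powerScore γ c₀ (A θ₀) (B θ₀) ≤ powerScore γ c (A θ) (B θ))
    (hcont : ContinuousAt (fun θ => A θ / B θ) θ₀) :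
    IsLocalMinOn (fun θ => sphereScore γ (A θ) (B θ)) Θ θ₀ := by
  have hlocal : IsLocalMin (fun c => powerScore γ c (A θ₀) (B θ₀)) c₀ :=
    Filter.eventually_of_mem (isOpen_Ioo.mem_nhds hc₀) fun c hc =>
      hopt c (Ioo_subset_Ioc_self hc) θ₀ hθ₀
  have hc₀_eq : A θ₀ / B θ₀ = c₀ := by
    rw [eq_mul_of_isLocalMin_powerScore hγ hc₀.1 hlocal, mul_div_cancel_right₀ _ (hB θ₀ hθ₀).ne']
  have hnear : ∀ᶠ θ in 𝓝 θ₀, A θ / B θ ∈ Ioo (0 : ℝ) 1 :=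
    hcont.eventually_mem (isOpen_Ioo.mem_nhds (hc₀_eq ▸ hc₀))
  filter_upwards [nhdsWithin_le_nhds hnear, self_mem_nhdsWithin] with θ hθ hθΘ
  have hAθ : 0 < A θ := (div_pos_iff_of_pos_right (hB θ hθΘ)).mp hθ.1
  have hAθ₀ : 0 < A θ₀ := (div_pos_iff_of_pos_right (hB θ₀ hθ₀)).mp (hc₀_eq ▸ hc₀.1)
  refine sphereScore_le_of_powerScore_div_le (by linarith) hAθ₀.le (hB θ₀ hθ₀) hAθ.le (hB θ hθΘ) ?_
  rw [hc₀_eq]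
  exact hopt _ (Ioo_subset_Ioc_self hθ) θ hθΘ

theorem empirical_conditional_density_power_theorem4_general
    {d : ℕ} (γ : ℝ) (hγ : 0 < γ)
    (Θ : Set (Fin d → ℝ))
    (A B : (Fin d → ℝ) → ℝ)
    (hBpos : ∀ θ ∈ Θ, 0 < B θ)
    (F : ℝ → (Fin d → ℝ) → ℝ)
    (hF : ∀ c θ, F c θ = -(1 + γ) * c ^ γ * A θ + γ * c ^ (1 + γ) * B θ)
    (creg : (Fin d → ℝ) → ℝ) (hcreg : ∀ θ, creg θ = A θ / B θ)
    (chat : ℝ) (θhat : Fin d → ℝ)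
    (hchat : chat ∈ Set.Ioc (0 : ℝ) 1) (hθhat : θhat ∈ Θ)
    (hopt : ∀ c ∈ Set.Ioc (0 : ℝ) 1, ∀ θ ∈ Θ, F chat θhat ≤ F c θ)
    (hcont : ∃ U ∈ nhds θhat, ContinuousOn creg U) :
    (chat < 1 →
      ∃ V ∈ nhds θhat, ∀ θ ∈ V ∩ Θ,
        -(A θhat) / (B θhat) ^ (γ / (1 + γ)) ≤ -(A θ) / (B θ) ^ (γ / (1 + γ))) ∧
    (chat = 1 → ∀ θ ∈ Θ, F 1 θhat ≤ F 1 θ) := by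
  refine ⟨fun hlt => ?_, fun hone θ hθ => hone ▸ hopt 1 ⟨one_pos, le_rfl⟩ θ hθ⟩
  obtain rfl : F = fun c θ => powerScore γ c (A θ) (B θ) := funext₂ hF
  obtain rfl : creg = fun θ => A θ / B θ := funext hcreg
  obtain ⟨U, hU, hcontU⟩ := hcont
  exact mem_nhdsWithin_iff_exists_mem_nhds_inter.mp <|
    isLocalMinOn_sphereScore_of_forall_powerScore_le hγ hBpos ⟨hchat.1, hlt⟩ hθhat hopt
      (hcontU.continuousAt hU)

/-- (Theorem 4) Let `(ĉ, θ̂)` be an optimal solution of minimizing the empirical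
conditional density-power score
`S_power(p̃, c·p_θ; q̃) = −(1+γ)c^γ·A(θ) + γc^{1+γ}·B(θ)` over `c ∈ (0,1]`, `θ ∈ Θ`,
where `A(θ) = (1/n)∑ p_θ(y_i|x_i)^γ` and `B(θ) = (1/n)∑ ∫ p_θ(y|x_i)^{1+γ}dy`, and
suppose `c_reg(θ) = A(θ)/B(θ)` is continuous near `θ̂`. If `0 < ĉ < 1` then `θ̂` is a
local minimizer of the empirical conditional pseudo-spherical score
`−A(θ)/B(θ)^{γ/(1+γ)}` over `Θ`; otherwise (`ĉ = 1`) `θ̂` minimizes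
`S_power(p̃, p_θ; q̃)` over `Θ`. -/
theorem empirical_conditional_density_power_theorem4
    {m d n : ℕ} (hn : 0 < n) (γ : ℝ) (hγ : 0 < γ)
    (Θ : Set (Fin d → ℝ)) (hΘ : IsOpen Θ)
    (p : (Fin d → ℝ) → (Fin m → ℝ) → ℝ → ℝ)
    (hpm : ∀ θ xx, Measurable (p θ xx)) (hp0 : ∀ θ xx y, 0 ≤ p θ xx y)
    (hpi : ∀ θ xx, Integrable (p θ xx)) (hp1 : ∀ θ xx, (∫ y, p θ xx y) = 1)
    (hpint : ∀ θ xx, Integrable (fun y : ℝ => p θ xx y ^ (1 + γ)))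
    (x : Fin n → (Fin m → ℝ)) (y : Fin n → ℝ)
    (A B : (Fin d → ℝ) → ℝ)
    (hA : ∀ θ, A θ = (1 / (n : ℝ)) * ∑ i, p θ (x i) (y i) ^ γ)
    (hB : ∀ θ, B θ = (1 / (n : ℝ)) * ∑ i, ∫ y' : ℝ, p θ (x i) y' ^ (1 + γ))
    (hBpos : ∀ θ ∈ Θ, 0 < B θ)
    (F : ℝ → (Fin d → ℝ) → ℝ)
    (hF : ∀ c θ, F c θ = -(1 + γ) * c ^ γ * A θ + γ * c ^ (1 + γ) * B θ)
    (creg : (Fin d → ℝ) → ℝ) (hcreg : ∀ θ, creg θ = A θ / B θ)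
    (chat : ℝ) (θhat : Fin d → ℝ)
    (hchat : chat ∈ Set.Ioc (0 : ℝ) 1) (hθhat : θhat ∈ Θ)
    (hopt : ∀ c ∈ Set.Ioc (0 : ℝ) 1, ∀ θ ∈ Θ, F chat θhat ≤ F c θ)
    (hcont : ∃ U ∈ nhds θhat, ContinuousOn creg U) :
    (chat < 1 →
      ∃ V ∈ nhds θhat, ∀ θ ∈ V ∩ Θ,
        -(A θhat) / (B θhat) ^ (γ / (1 + γ)) ≤ -(A θ) / (B θ) ^ (γ / (1 + γ))) ∧
    (chat = 1 → ∀ θ ∈ Θ, F 1 θhat ≤ F 1 θ) :=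
  empirical_conditional_density_power_theorem4_general γ hγ Θ A B hBpos F hF creg hcreg chat θhat
    hchat hθhat hopt hcont
end

section
/- Let γ > 0, let q be a probability density on ℝ^m, let c₀ : ℝ^m → (0,1] be measurable, let p₀(y|x) and w(y|x) be conditional probability densities, and set p(y|x) = c₀(x)p₀(y|x) + (1−c₀(x))w(y|x). Let p_θ(y|x) be a conditional probability density with all the relevant integrals finite, define ε_θ(x) = ∫w(y|x)p_θ(y|x)^γ dy, and let c > 0. Then the conditional density-power score satisfies the exact decomposition S_power(p, c·p_θ; q) = S_power(c₀p₀, c·p_θ; q) − (1+γ)c^γ∫(1−c₀(x))q(x)ε_θ(x)dx. -/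
open MeasureTheory

/-- Exact decomposition of the conditional density-power score under heterogeneous
contamination `p(y|x) = c₀(x)p₀(y|x) + (1−c₀(x))w(y|x)`:
`S_power(p, c·p_θ; q) = S_power(c₀p₀, c·p_θ; q) − (1+γ)c^γ∫(1−c₀(x))q(x)ε_θ(x)dx`,
where `ε_θ(x) = ∫ w(y|x)p_θ(y|x)^γ dy`. -/
theorem conditional_density_power_heterogeneous_decomposition
    {m : ℕ} (γ : ℝ) (hγ : 0 < γ)
    (q : (Fin m → ℝ) → ℝ)
    (hqm : Measurable q) (hq0 : ∀ x, 0 ≤ q x)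
    (hqi : Integrable q) (hq1 : (∫ x, q x) = 1)
    (c₀ : (Fin m → ℝ) → ℝ) (hc₀m : Measurable c₀)
    (hc₀ : ∀ x, c₀ x ∈ Set.Ioc (0 : ℝ) 1)
    (p₀ w pθ : ((Fin m → ℝ) × ℝ) → ℝ)
    (hp₀m : Measurable p₀) (hwm : Measurable w) (hpθm : Measurable pθ)
    (hp₀0 : ∀ z, 0 ≤ p₀ z) (hw0 : ∀ z, 0 ≤ w z) (hpθ0 : ∀ z, 0 ≤ pθ z)
    (hp₀1 : ∀ x, (∫ y : ℝ, p₀ (x, y)) = 1)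
    (hw1 : ∀ x, (∫ y : ℝ, w (x, y)) = 1)
    (hpθ1 : ∀ x, (∫ y : ℝ, pθ (x, y)) = 1)
    (hqint : Integrable (fun z : (Fin m → ℝ) × ℝ => q z.1 * pθ z ^ (1 + γ)))
    (hp₀int : Integrable (fun z : (Fin m → ℝ) × ℝ =>
      c₀ z.1 * p₀ z * q z.1 * pθ z ^ γ))
    (hwint : Integrable (fun z : (Fin m → ℝ) × ℝ =>
      (1 - c₀ z.1) * w z * q z.1 * pθ z ^ γ))
    (c : ℝ) (hc : 0 < c) :
    γ * (∫ z, q z.1 * (c * pθ z) ^ (1 + γ)) -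
        (1 + γ) * (∫ z, (c₀ z.1 * p₀ z + (1 - c₀ z.1) * w z) * q z.1 * (c * pθ z) ^ γ) =
      (γ * (∫ z, q z.1 * (c * pθ z) ^ (1 + γ)) -
          (1 + γ) * (∫ z, (c₀ z.1 * p₀ z) * q z.1 * (c * pθ z) ^ γ)) -
        (1 + γ) * c ^ γ *
          (∫ x, (1 - c₀ x) * q x * (∫ y : ℝ, w (x, y) * pθ (x, y) ^ γ)) := by

  have hceq : ∀ z : (Fin m → ℝ) × ℝ, (c * pθ z) ^ γ = c ^ γ * pθ z ^ γ := fun z =>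
    Real.mul_rpow hc.le (hpθ0 z)
  have h2 : (∫ z, (c₀ z.1 * p₀ z + (1 - c₀ z.1) * w z) * q z.1 * (c * pθ z) ^ γ)
      = (∫ z, (c₀ z.1 * p₀ z) * q z.1 * (c * pθ z) ^ γ)
        + c ^ γ * ∫ z, (1 - c₀ z.1) * w z * q z.1 * pθ z ^ γ := by
    simp_rw [hceq]
    have heq : ∀ z : (Fin m → ℝ) × ℝ,
        (c₀ z.1 * p₀ z + (1 - c₀ z.1) * w z) * q z.1 * (c ^ γ * pθ z ^ γ)
        = c ^ γ * (c₀ z.1 * p₀ z * q z.1 * pθ z ^ γ)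
          + c ^ γ * ((1 - c₀ z.1) * w z * q z.1 * pθ z ^ γ) := by
      intro z; ring
    have heq2 : ∀ z : (Fin m → ℝ) × ℝ,
        c₀ z.1 * p₀ z * q z.1 * (c ^ γ * pθ z ^ γ)
        = c ^ γ * (c₀ z.1 * p₀ z * q z.1 * pθ z ^ γ) := by intro z; ring
    simp_rw [heq, heq2]
    rw [integral_add (hp₀int.const_mul _) (hwint.const_mul _), integral_const_mul,
      integral_const_mul]
  have hfub : (∫ z, (1 - c₀ z.1) * w z * q z.1 * pθ z ^ γ)
      = ∫ x, (1 - c₀ x) * q x * (∫ y : ℝ, w (x, y) * pθ (x, y) ^ γ) := by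
    rw [show (volume : Measure ((Fin m → ℝ) × ℝ)) = (volume : Measure (Fin m → ℝ)).prod (volume : Measure ℝ) from rfl, MeasureTheory.integral_prod _ hwint]
    congr 1
    ext x
    have : ∀ y : ℝ, (1 - c₀ x) * w (x, y) * q x * pθ (x, y) ^ γ
        = ((1 - c₀ x) * q x) * (w (x, y) * pθ (x, y) ^ γ) := by intro y; ring
    simp_rw [this]
    rw [integral_const_mul]
  rw [h2, hfub]
  ring
end
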